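/- arXiv:1410.5105 — 4 statements merged into one kernel-verified Lean document; each statement's English description precedes it below -/
import Mathlib

section
/- Let G=(V,E) be a finite undirected graph and T ⊆ V a set of r ≥ 1 terminals, and let k ≥ 1 be an integer. Suppose that for every pair of distinct terminals t, t' ∈ T there exists an edge set C ⊆ E with |C| ≤ k−1 such that t and t' lie in different connected components of (V, E \ C). Then there exists an edge set Ē ⊆ E with |Ē| ≤ (k−1)(r−1) such that in the graph (V, E \ Ē) every two distinct terminals of T lie in different connected components. -/
private lemma stmt_0_aux {V : Type*} [Fintype V] [DecidableEq V] (G : SimpleGraph V) (k : ℕ)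
    (T : Finset V)
    (h : ∀ t ∈ T, ∀ t' ∈ T, t ≠ t' →
      ∃ C : Finset (Sym2 V), ↑C ⊆ G.edgeSet ∧ C.card ≤ k - 1 ∧
        ¬ (G.deleteEdges ↑C).Reachable t t') :
    ∃ E' : Finset (Sym2 V), ↑E' ⊆ G.edgeSet ∧ E'.card ≤ (k - 1) * (T.card - 1) ∧
      ∀ t ∈ T, ∀ t' ∈ T, t ≠ t' → ¬ (G.deleteEdges ↑E').Reachable t t' := by
  classical
  induction T using Finset.strongInduction with
  | _ T ih =>
    by_cases hcard : T.card ≤ 1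
    · refine ⟨∅, by simp, by simp, ?_⟩
      intro a ha b hb hab
      exact absurd (Finset.card_le_one.mp hcard a ha b hb) hab
    push_neg at hcard
    obtain ⟨t, ht⟩ : T.Nonempty := Finset.card_pos.mp (by omega)
    set T' := T.erase t with hT'
    have hsub : T' ⊂ T := Finset.erase_ssubset ht
    have hT'card : T'.card = T.card - 1 := Finset.card_erase_of_mem ht
    obtain ⟨E₁, hE₁sub, hE₁card, hE₁sep⟩ := ih T' hsub (fun a ha b hb hab =>
      h a (Finset.mem_of_mem_erase ha) b (Finset.mem_of_mem_erase hb) hab)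
    by_cases hre : ∃ t' ∈ T', (G.deleteEdges ↑E₁).Reachable t t'
    · obtain ⟨t', ht', hret'⟩ := hre
      have htt' : t ≠ t' := by
        rintro rfl; exact (Finset.notMem_erase t T) ht'
      obtain ⟨C, hCsub, hCcard, hCsep⟩ := h t ht t' (Finset.mem_of_mem_erase ht') htt'
      have hmono1 : G.deleteEdges ↑(E₁ ∪ C) ≤ G.deleteEdges ↑E₁ := by
        apply G.deleteEdges_anti
        rw [Finset.coe_union]; exact Set.subset_union_left
      have hmono2 : G.deleteEdges ↑(E₁ ∪ C) ≤ G.deleteEdges ↑C := by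
        apply G.deleteEdges_anti
        rw [Finset.coe_union]; exact Set.subset_union_right
      refine ⟨E₁ ∪ C, ?_, ?_, ?_⟩
      · rw [Finset.coe_union]; exact Set.union_subset hE₁sub hCsub
      · calc (E₁ ∪ C).card ≤ E₁.card + C.card := Finset.card_union_le _ _
          _ ≤ (k - 1) * (T'.card - 1) + (k - 1) := add_le_add hE₁card hCcard
          _ ≤ (k - 1) * (T.card - 1) := by
              rw [← Nat.mul_succ]
              apply Nat.mul_le_mul_left
              omega
      · -- key separation argument
        have key : ∀ a ∈ T', ¬ (G.deleteEdges ↑(E₁ ∪ C)).Reachable t a := by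
          intro a ha hr
          by_cases hat' : a = t'
          · exact hCsep (hat' ▸ (hr.mono hmono2))
          · exact hE₁sep a ha t' ht' hat'
              ((hr.mono hmono1).symm.trans hret')
        intro a ha b hb hab hr
        by_cases hat : a = t
        · subst hat
          exact key b (Finset.mem_erase.mpr ⟨hab.symm, hb⟩) hr
        by_cases hbt : b = t
        · subst hbt
          exact key a (Finset.mem_erase.mpr ⟨hat, ha⟩) hr.symm
        · exact hE₁sep a (Finset.mem_erase.mpr ⟨hat, ha⟩)
            b (Finset.mem_erase.mpr ⟨hbt, hb⟩) hab (hr.mono hmono1)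
    · push_neg at hre
      refine ⟨E₁, hE₁sub, le_trans hE₁card (Nat.mul_le_mul_left _ (by omega)), ?_⟩
      intro a ha b hb hab hr
      by_cases hat : a = t
      · subst hat
        exact hre b (Finset.mem_erase.mpr ⟨hab.symm, hb⟩) hr
      by_cases hbt : b = t
      · subst hbt
        exact hre a (Finset.mem_erase.mpr ⟨hat, ha⟩) hr.symm
      · exact hE₁sep a (Finset.mem_erase.mpr ⟨hat, ha⟩)
          b (Finset.mem_erase.mpr ⟨hbt, hb⟩) hab hr

/-- If every pair of distinct terminals in `T` (with `|T| = r ≥ 1`) can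
be disconnected by deleting at most `k-1` edges, then there is a set of at most
`(k-1)(r-1)` edges whose deletion pairwise disconnects all terminals. -/
theorem stmt_0 {V : Type*} [Fintype V] [DecidableEq V] (G : SimpleGraph V)
    (T : Finset V) (r k : ℕ) (hr : 1 ≤ r) (hT : T.card = r) (hk : 1 ≤ k)
    (h : ∀ t ∈ T, ∀ t' ∈ T, t ≠ t' →
      ∃ C : Finset (Sym2 V), ↑C ⊆ G.edgeSet ∧ C.card ≤ k - 1 ∧
        ¬ (G.deleteEdges ↑C).Reachable t t') :
    ∃ E' : Finset (Sym2 V), ↑E' ⊆ G.edgeSet ∧ E'.card ≤ (k - 1) * (r - 1) ∧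
      ∀ t ∈ T, ∀ t' ∈ T, t ≠ t' → ¬ (G.deleteEdges ↑E').Reachable t t' := by
  subst hT
  exact stmt_0_aux G k T h
end

section
/- Region-growing lemma, ball-volume bound: in the region-growing setup (edge version), for all real numbers 0 ≤ a < b one has ∫_a^b c(∂F(ρ)) / ( Vol(ρ) · ln( e·Vol(b) / Vol(ρ) ) ) dρ ≤ ln ln( e·Vol(b) / Vol(a) ). Equivalently, if ρ is chosen uniformly at random from [a,b), then E_ρ[ c(∂F(ρ)) / ( Vol(ρ)·ln(e·Vol(b)/Vol(ρ)) ) ] ≤ (1/(b−a))·ln ln( e·Vol(b)/Vol(a) ). -/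
open scoped Classical

namespace RegionGrow

variable {V : Type*}

/-- The ball `B^S_ℓ(z,ρ)`: vertices of `S` at `ℓ`-distance at most `ρ` from `z`. -/
noncomputable def ball (ℓ : V → V → ℝ) (S : Finset V) (z : V) (ρ : ℝ) : Finset V :=
  S.filter fun v => ℓ z v ≤ ρ

/-- The boundary `∂^{S,F}_ℓ(z,ρ)`: edges of `F` with both endpoints in `S`, exactly one
of which lies in the ball of radius `ρ` around `z`. -/
noncomputable def bdry (ℓ : V → V → ℝ) (S : Finset V) (F : Finset (V × V)) (z : V) (ρ : ℝ) :
    Finset (V × V) :=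
  F.filter fun p => p.1 ∈ S ∧ p.2 ∈ S ∧ ¬ ((ℓ z p.1 ≤ ρ) ↔ (ℓ z p.2 ≤ ρ))

/-- The volume `𝒱^{S,F}_ℓ(β; z, ρ)`.  For a crossing edge, the endpoint inside the ball
is the one closer to `z`, so its distance to `z` is `min (ℓ z u) (ℓ z v)`. -/
noncomputable def vol (c : V × V → ℝ) (ℓ : V → V → ℝ) (S : Finset V) (F : Finset (V × V))
    (z : V) (β ρ : ℝ) : ℝ :=
  β + ∑ p ∈ F.filter (fun p => p.1 ∈ ball ℓ S z ρ ∧ p.2 ∈ ball ℓ S z ρ), c p * ℓ p.1 p.2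
    + ∑ p ∈ bdry ℓ S F z ρ, c p * (ρ - min (ℓ z p.1) (ℓ z p.2))

/-- The complementary volume `𝒱̄^{S,F}_ℓ(β; z, ρ)`.  For a crossing edge, the endpoint
outside the ball is the one farther from `z`, at distance `max (ℓ z u) (ℓ z v)`. -/
noncomputable def cvol (c : V × V → ℝ) (ℓ : V → V → ℝ) (S : Finset V) (F : Finset (V × V))
    (z : V) (β ρ : ℝ) : ℝ :=
  β + ∑ p ∈ F.filter
        (fun p => p.1 ∈ S ∧ p.1 ∉ ball ℓ S z ρ ∧ p.2 ∈ S ∧ p.2 ∉ ball ℓ S z ρ),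
        c p * ℓ p.1 p.2
    + ∑ p ∈ bdry ℓ S F z ρ, c p * (max (ℓ z p.1) (ℓ z p.2) - ρ)

/-! With `M = Vol(b)`, the function `G(ρ) = -log log(e·M/Vol(ρ))` is monotone on `[a, b]` and
vanishes at `b`, so Lebesgue's bound `∫ₐᵇ G' ≤ G(b) - G(a)` for monotone functions gives the
right-hand side. Off the finitely many radii `ℓ(z, v)`, `v ∈ S`, the ball is locally constant,
so `Vol` is affine near `ρ` with slope `c(∂F(ρ))`, and the chain rule turns `G'` into the
integrand. At those radii `Vol` may jump (upwards, by the triangle inequality); only its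
monotonicity is used. -/

open Set Filter Topology MeasureTheory Interval

lemma HasDerivAt.neg_log_log_const_div {f : ℝ → ℝ} {f' C x : ℝ} (hf : HasDerivAt f f' x)
    (hC : C ≠ 0) (hfx : f x ≠ 0) (hlog : Real.log (C / f x) ≠ 0) :
    HasDerivAt (fun y => -Real.log (Real.log (C / f y)))
      (f' / (f x * Real.log (C / f x))) x := by
  have hinner : HasDerivAt (fun y => Real.log (C / f y)) (-f' / f x) x :=
    (((hasDerivAt_const x C).div hf hfx).log (div_ne_zero hC hfx)).congr_deriv
      (by simp only [Pi.div_apply]; field_simp; ring)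
  exact (hinner.log hlog).neg.congr_deriv (by field_simp)

theorem integral_div_mul_log_le_log_log {f f' : ℝ → ℝ} {a b : ℝ} (hab : a ≤ b)
    (hf : MonotoneOn f (Icc a b)) (hfa : 0 < f a)
    (hf' : ∀ᵐ x, x ∈ Ioo a b → HasDerivAt f (f' x) x) :
    ∫ x in a..b, f' x / (f x * Real.log (Real.exp 1 * f b / f x)) ≤
      Real.log (Real.log (Real.exp 1 * f b / f a)) := by
  set h : ℝ → ℝ := fun x => Real.log (Real.exp 1 * f b / f x)
  have hpos : ∀ x ∈ Icc a b, 0 < f x := fun x hx => hfa.trans_le (hf ⟨le_rfl, hab⟩ hx hx.1)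
  have hfb := hpos b ⟨hab, le_rfl⟩
  have h_anti : AntitoneOn h (Icc a b) := fun x hx y hy hxy =>
    Real.log_le_log (by have := hpos y hy; positivity) <|
      div_le_div_of_nonneg_left (by positivity) (hpos x hx) (hf hx hy hxy)
  have hb : h b = 1 := by
    simp only [h]
    rw [mul_div_assoc, div_self hfb.ne', mul_one, Real.log_exp]
  have hone : ∀ x ∈ Icc a b, 1 ≤ h x := fun x hx => hb ▸ h_anti hx ⟨hab, le_rfl⟩ hx.2
  have hG : MonotoneOn (fun x => -Real.log (h x)) (uIcc a b) := by
    rw [uIcc_of_le hab]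
    intro x hx y hy hxy
    exact neg_le_neg (Real.log_le_log (by linarith [hone y hy]) (h_anti hx hy hxy))
  have hderiv : ∀ᵐ x, x ∈ Ι a b →
      f' x / (f x * h x) = deriv (fun x => -Real.log (h x)) x := by
    filter_upwards [hf', (countable_singleton b).ae_notMem volume] with x hx hxb hxab
    rw [uIoc_of_le hab] at hxab
    have hxab' : x ∈ Ioo a b := ⟨hxab.1, lt_of_le_of_ne hxab.2 hxb⟩
    have hx_mem := Ioo_subset_Icc_self hxab'
    exact (HasDerivAt.neg_log_log_const_div (hx hxab') (by positivity) (hpos x hx_mem).ne'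
      (zero_lt_one.trans_le (hone x hx_mem)).ne').deriv.symm
  rw [intervalIntegral.integral_congr_ae hderiv]
  refine (hG.intervalIntegral_deriv_mem_uIcc).2.trans (max_le ?_ ?_)
  · exact Real.log_nonneg (hone a ⟨le_rfl, hab⟩)
  · simp only [hb, Real.log_one, neg_zero, zero_sub, neg_neg]
    exact le_rfl

noncomputable def edgeVolume (L m M ρ : ℝ) : ℝ := if M ≤ ρ then L else if m ≤ ρ then ρ - m else 0

section edgeVolume

variable {L m M : ℝ}

lemma edgeVolume_nonneg (hmM : m ≤ M) (hML : M ≤ m + L) (ρ : ℝ) : 0 ≤ edgeVolume L m M ρ := by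
  unfold edgeVolume
  split_ifs <;> linarith

lemma edgeVolume_monotone (hmM : m ≤ M) (hML : M ≤ m + L) : Monotone (edgeVolume L m M) := by
  intro ρ σ h
  unfold edgeVolume
  split_ifs <;> linarith

end edgeVolume

lemma max_le_min_add_of_triangle {ℓ : V → V → ℝ} (hsymm : ∀ u v, ℓ u v = ℓ v u)
    (htri : ∀ u v w, ℓ u w ≤ ℓ u v + ℓ v w) (z u v : V) :
    max (ℓ z u) (ℓ z v) ≤ min (ℓ z u) (ℓ z v) + ℓ u v := by
  rcases le_total (ℓ z u) (ℓ z v) with h | h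
  · rw [max_eq_right h, min_eq_left h]
    exact htri z u v
  · rw [max_eq_left h, min_eq_right h, hsymm u v]
    exact htri z v u

lemma eventually_forall_le_iff_le {ι : Type*} (s : Finset ι) (g : ι → ℝ) {ρ : ℝ}
    (hρ : ρ ∉ s.image g) : ∀ᶠ σ in 𝓝 ρ, ∀ i ∈ s, g i ≤ σ ↔ g i ≤ ρ := by
  refine (Filter.eventually_all_finset s).2 fun i hi => ?_
  rcases lt_or_gt_of_ne fun h => hρ (Finset.mem_image.2 ⟨i, hi, h⟩) with h | h
  · filter_upwards [eventually_gt_nhds h] with σ hσ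
    simp [h.le, hσ.le]
  · filter_upwards [eventually_lt_nhds h] with σ hσ
    simp [not_le.2 h, not_le.2 hσ]

section vol

variable (c : V × V → ℝ) (ℓ : V → V → ℝ) (S : Finset V) (F : Finset (V × V)) (z : V) (β : ℝ)

lemma vol_eq_sum_edgeVolume (ρ : ℝ) :
    vol c ℓ S F z β ρ = β + ∑ p ∈ F.filter (fun p => p.1 ∈ S ∧ p.2 ∈ S),
      c p * edgeVolume (ℓ p.1 p.2) (min (ℓ z p.1) (ℓ z p.2)) (max (ℓ z p.1) (ℓ z p.2)) ρ := by
  simp only [vol, bdry, ball, Finset.sum_filter, Finset.mem_filter, add_assoc,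
    ← Finset.sum_add_distrib]
  congr 1
  refine Finset.sum_congr rfl fun p _ => ?_
  unfold edgeVolume
  split_ifs <;> (try simp only [max_le_iff, min_le_iff] at *) <;> first | ring1 | tauto

variable {c ℓ}

lemma le_vol (hc : ∀ p, 0 ≤ c p) (hsymm : ∀ u v, ℓ u v = ℓ v u)
    (htri : ∀ u v w, ℓ u w ≤ ℓ u v + ℓ v w) (ρ : ℝ) : β ≤ vol c ℓ S F z β ρ := by
  rw [vol_eq_sum_edgeVolume]
  exact le_add_of_nonneg_right <| Finset.sum_nonneg fun p _ => mul_nonneg (hc p) <|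
    edgeVolume_nonneg min_le_max (max_le_min_add_of_triangle hsymm htri z p.1 p.2) ρ

lemma vol_monotone (hc : ∀ p, 0 ≤ c p) (hsymm : ∀ u v, ℓ u v = ℓ v u)
    (htri : ∀ u v w, ℓ u w ≤ ℓ u v + ℓ v w) : Monotone (vol c ℓ S F z β) := by
  intro ρ σ h
  simp only [vol_eq_sum_edgeVolume]
  gcongr with p
  · exact hc p
  · exact edgeVolume_monotone min_le_max (max_le_min_add_of_triangle hsymm htri z p.1 p.2) h

lemma hasDerivAt_vol {ρ : ℝ} (hρ : ρ ∉ S.image (ℓ z)) :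
    HasDerivAt (vol c ℓ S F z β) (∑ p ∈ bdry ℓ S F z ρ, c p) ρ := by
  have hlin := (HasDerivAt.fun_sum fun p (_ : p ∈ bdry ℓ S F z ρ) =>
      ((hasDerivAt_id ρ).sub_const (min (ℓ z p.1) (ℓ z p.2))).const_mul (c p)).const_add
    (β + ∑ p ∈ F.filter (fun p => p.1 ∈ ball ℓ S z ρ ∧ p.2 ∈ ball ℓ S z ρ), c p * ℓ p.1 p.2)
  simp only [id, mul_one] at hlin
  refine hlin.congr_of_eventuallyEq ?_
  filter_upwards [eventually_forall_le_iff_le S (ℓ z) hρ] with σ hσ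
  have hball : ball ℓ S z σ = ball ℓ S z ρ := Finset.filter_congr fun v hv => hσ v hv
  have hbdry : bdry ℓ S F z σ = bdry ℓ S F z ρ := Finset.filter_congr fun p _ => by
    constructor <;> rintro ⟨h1, h2, h⟩ <;> exact ⟨h1, h2, by simpa [hσ _ h1, hσ _ h2] using h⟩
  simp only [vol, hball, hbdry]

end vol

theorem stmt_3_general (F : Finset (V × V))
    (c : V × V → ℝ) (hc : ∀ p, 0 ≤ c p)
    (ℓ : V → V → ℝ)
    (hℓsymm : ∀ u v, ℓ u v = ℓ v u)
    (hℓtri : ∀ u v w, ℓ u w ≤ ℓ u v + ℓ v w)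
    (S : Finset V) (z : V) (β : ℝ) (hβ : 0 < β)
    (a b : ℝ) (hab : a < b) :
    (∫ ρ in a..b, (∑ p ∈ bdry ℓ S F z ρ, c p) /
        (vol c ℓ S F z β ρ * Real.log (Real.exp 1 * vol c ℓ S F z β b / vol c ℓ S F z β ρ))) ≤
      Real.log (Real.log (Real.exp 1 * vol c ℓ S F z β b / vol c ℓ S F z β a)) := by
  refine integral_div_mul_log_le_log_log hab.le
    ((vol_monotone S F z β hc hℓsymm hℓtri).monotoneOn _)
    (hβ.trans_le (le_vol S F z β hc hℓsymm hℓtri a)) ?_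
  filter_upwards [(S.image (ℓ z)).countable_toSet.ae_notMem volume] with ρ hρ _
  exact hasDerivAt_vol S F z β hρ

/-- Region-growing lemma, ball-volume bound:
`∫_a^b c(∂F(ρ)) / (Vol(ρ)·ln(e·Vol(b)/Vol(ρ))) dρ ≤ ln ln (e·Vol(b)/Vol(a))`. -/
theorem stmt_3 [Fintype V] (E F : Finset (V × V)) (hFE : F ⊆ E)
    (c : V × V → ℝ) (hc : ∀ p, 0 ≤ c p)
    (ℓ : V → V → ℝ) (hℓ0 : ∀ v, ℓ v v = 0) (hℓnn : ∀ u v, 0 ≤ ℓ u v)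
    (hℓsymm : ∀ u v, ℓ u v = ℓ v u)
    (hℓtri : ∀ u v w, ℓ u w ≤ ℓ u v + ℓ v w)
    (S : Finset V) (z : V) (β : ℝ) (hβ : 0 < β)
    (a b : ℝ) (ha : 0 ≤ a) (hab : a < b) :
    (∫ ρ in a..b, (∑ p ∈ bdry ℓ S F z ρ, c p) /
        (vol c ℓ S F z β ρ * Real.log (Real.exp 1 * vol c ℓ S F z β b / vol c ℓ S F z β ρ))) ≤
      Real.log (Real.log (Real.exp 1 * vol c ℓ S F z β b / vol c ℓ S F z β a)) :=
  stmt_3_general F c hc ℓ hℓsymm hℓtri S z β hβ a b hab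

end RegionGrow
end

section
/- Region-growing lemma, complementary-volume bound: in the region-growing setup (edge version), for all real numbers 0 ≤ a < b one has ∫_a^b c(∂F(ρ)) / ( cVol(ρ) · ln( e·cVol(a) / cVol(ρ) ) ) dρ ≤ ln ln( e·cVol(a) / cVol(b) ). Equivalently, if ρ is chosen uniformly at random from [a,b), then E_ρ[ c(∂F(ρ)) / ( cVol(ρ)·ln(e·cVol(a)/cVol(ρ)) ) ] ≤ (1/(b−a))·ln ln( e·cVol(a)/cVol(b) ). -/
open scoped Classical

/-!
With `g = cvol` and `K = g a`, the integrand is the derivative of `ψ ρ = log (log (e K / g ρ))`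
away from the finitely many radii `ℓ z v`: between them the ball does not change, so `g` is affine
with slope `-c(∂F(ρ))`. At those radii `g` can only jump down, because the triangle inequality
gives `ℓ u v ≥ |ℓ z u - ℓ z v|`; hence `ψ` is monotone on `[a, b]`, and for a monotone function
`∫ₐᵇ ψ' ≤ ψ b - ψ a`. Finally `ψ a = log (log e) = 0`.
-/

open Real Set Filter Topology MeasureTheory

lemma one_lt_exp_one_mul_div {K t : ℝ} (ht : 0 < t) (htK : t ≤ K) : 1 < exp 1 * K / t := by
  rw [lt_div_iff₀ ht, one_mul]
  nlinarith [add_one_lt_exp one_ne_zero]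

lemma antitoneOn_log_log_exp_one_mul_div (K : ℝ) :
    AntitoneOn (fun t => log (log (exp 1 * K / t))) (Ioc 0 K) := by
  intro s ⟨hs, _⟩ t ⟨ht, htK⟩ hst
  have hK : 0 < K := ht.trans_le htK
  exact log_le_log (log_pos (one_lt_exp_one_mul_div ht htK))
    (log_le_log (by positivity) (div_le_div_of_nonneg_left (by positivity) hs hst))

lemma hasDerivAt_log_log_exp_one_mul_div {g : ℝ → ℝ} {g' K ρ : ℝ} (hg : HasDerivAt g g' ρ)
    (hgρ : 0 < g ρ) (hgK : g ρ ≤ K) :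
    HasDerivAt (fun σ => log (log (exp 1 * K / g σ)))
      (-g' / (g ρ * log (exp 1 * K / g ρ))) ρ := by
  have hq := one_lt_exp_one_mul_div hgρ hgK
  have hK : 0 < K := hgρ.trans_le hgK
  have := ((((hasDerivAt_const ρ (exp 1 * K)).div hg hgρ.ne').log (by positivity)).log
    (log_pos hq).ne')
  simp only [Pi.div_apply] at this
  convert this using 1
  field_simp
  ring

namespace RegionGrow

variable {V : Type*}

noncomputable def outsideLength (ℓ : V → V → ℝ) (z : V) (p : V × V) (ρ : ℝ) : ℝ :=
  if max (ℓ z p.1) (ℓ z p.2) ≤ ρ then 0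
  else if min (ℓ z p.1) (ℓ z p.2) ≤ ρ then max (ℓ z p.1) (ℓ z p.2) - ρ
  else ℓ p.1 p.2

section

variable {c : V × V → ℝ} {ℓ : V → V → ℝ} {S : Finset V} {F : Finset (V × V)} {z : V} {β : ℝ}

lemma cvol_eq_add_sum_outsideLength (ρ : ℝ) :
    cvol c ℓ S F z β ρ
      = β + ∑ p ∈ F.filter (fun p => p.1 ∈ S ∧ p.2 ∈ S), c p * outsideLength ℓ z p ρ := by
  rw [cvol, bdry, add_assoc, Finset.sum_filter, Finset.sum_filter, Finset.sum_filter,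
    ← Finset.sum_add_distrib]
  congr 1
  refine Finset.sum_congr rfl fun p _ => ?_
  simp only [ball, Finset.mem_filter, outsideLength]
  split_ifs <;> grind

lemma outsideLength_nonneg (hℓ : ∀ u v, 0 ≤ ℓ u v) (p : V × V) (ρ : ℝ) :
    0 ≤ outsideLength ℓ z p ρ := by
  unfold outsideLength
  split_ifs <;> linarith [hℓ p.1 p.2]

lemma outsideLength_antitone (hℓsymm : ∀ u v, ℓ u v = ℓ v u)
    (hℓtri : ∀ u v w, ℓ u w ≤ ℓ u v + ℓ v w) (p : V × V) :
    Antitone (outsideLength ℓ z p) := by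
  have hlen : max (ℓ z p.1) (ℓ z p.2) - min (ℓ z p.1) (ℓ z p.2) ≤ ℓ p.1 p.2 := by
    rcases le_total (ℓ z p.1) (ℓ z p.2) with h | h
    · rw [max_eq_right h, min_eq_left h]
      linarith [hℓtri z p.1 p.2]
    · rw [max_eq_left h, min_eq_right h, hℓsymm p.1 p.2]
      linarith [hℓtri z p.2 p.1]
  intro ρ σ hρσ
  unfold outsideLength
  split_ifs <;> linarith [min_le_max (a := ℓ z p.1) (b := ℓ z p.2)]

lemma cvol_antitone (hc : ∀ p, 0 ≤ c p) (hℓsymm : ∀ u v, ℓ u v = ℓ v u)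
    (hℓtri : ∀ u v w, ℓ u w ≤ ℓ u v + ℓ v w) : Antitone (cvol c ℓ S F z β) := by
  intro ρ σ hρσ
  simp only [cvol_eq_add_sum_outsideLength]
  gcongr with p
  · exact hc p
  · exact outsideLength_antitone hℓsymm hℓtri p hρσ

lemma le_cvol (hc : ∀ p, 0 ≤ c p) (hℓ : ∀ u v, 0 ≤ ℓ u v) (ρ : ℝ) : β ≤ cvol c ℓ S F z β ρ := by
  rw [cvol_eq_add_sum_outsideLength, le_add_iff_nonneg_right]
  exact Finset.sum_nonneg fun p _ => mul_nonneg (hc p) (outsideLength_nonneg hℓ p ρ)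

lemma ball_congr {ρ σ : ℝ} (h : ∀ v ∈ S, ℓ z v ≤ σ ↔ ℓ z v ≤ ρ) : ball ℓ S z σ = ball ℓ S z ρ :=
  Finset.filter_congr fun v hv => h v hv

lemma bdry_congr {ρ σ : ℝ} (h : ∀ v ∈ S, ℓ z v ≤ σ ↔ ℓ z v ≤ ρ) : bdry ℓ S F z σ = bdry ℓ S F z ρ :=
  Finset.filter_congr fun p _ => and_congr_right fun h1 => and_congr_right fun h2 => by
    rw [h p.1 h1, h p.2 h2]

lemma cvol_eq_sub_of_forall_le_iff {ρ σ : ℝ} (h : ∀ v ∈ S, ℓ z v ≤ σ ↔ ℓ z v ≤ ρ) :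
    cvol c ℓ S F z β σ = cvol c ℓ S F z β ρ - (∑ p ∈ bdry ℓ S F z ρ, c p) * (σ - ρ) := by
  rw [cvol, cvol, ball_congr h, bdry_congr (F := F) h, Finset.sum_mul,
    add_sub_assoc, ← Finset.sum_sub_distrib]
  congr 1
  exact Finset.sum_congr rfl fun p _ => by ring

lemma hasDerivAt_cvol {ρ : ℝ} (hρ : ρ ∉ S.image (ℓ z)) :
    HasDerivAt (cvol c ℓ S F z β) (-∑ p ∈ bdry ℓ S F z ρ, c p) ρ := by
  have hsame : ∀ᶠ σ in 𝓝 ρ, ∀ v ∈ S, ℓ z v ≤ σ ↔ ℓ z v ≤ ρ := by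
    refine (Finset.eventually_all S).2 fun v hv => ?_
    rcases lt_or_gt_of_ne (fun h => hρ (Finset.mem_image.2 ⟨v, hv, h⟩)) with h | h
    · filter_upwards [eventually_gt_nhds h] with σ hσ
      simp only [h.le, hσ.le]
    · filter_upwards [eventually_lt_nhds h] with σ hσ
      simp only [not_le.2 h, not_le.2 hσ]
  have haffine : HasDerivAt (fun σ => cvol c ℓ S F z β ρ - (∑ p ∈ bdry ℓ S F z ρ, c p) * (σ - ρ))
      (-∑ p ∈ bdry ℓ S F z ρ, c p) ρ := by
    simpa using ((hasDerivAt_id ρ).sub_const ρ).const_mul (∑ p ∈ bdry ℓ S F z ρ, c p) |>.const_sub _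
  exact haffine.congr_of_eventuallyEq <| hsame.mono fun σ hσ => cvol_eq_sub_of_forall_le_iff hσ

end

theorem stmt_4_general (F : Finset (V × V))
    (c : V × V → ℝ) (hc : ∀ p, 0 ≤ c p)
    (ℓ : V → V → ℝ) (hℓnn : ∀ u v, 0 ≤ ℓ u v)
    (hℓsymm : ∀ u v, ℓ u v = ℓ v u)
    (hℓtri : ∀ u v w, ℓ u w ≤ ℓ u v + ℓ v w)
    (S : Finset V) (z : V) (β : ℝ) (hβ : 0 < β)
    (a b : ℝ) (hab : a < b) :
    (∫ ρ in a..b, (∑ p ∈ bdry ℓ S F z ρ, c p) /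
        (cvol c ℓ S F z β ρ * Real.log (Real.exp 1 * cvol c ℓ S F z β a / cvol c ℓ S F z β ρ))) ≤
      Real.log (Real.log (Real.exp 1 * cvol c ℓ S F z β a / cvol c ℓ S F z β b)) := by
  set g := cvol c ℓ S F z β
  set ψ : ℝ → ℝ := fun ρ => log (log (exp 1 * g a / g ρ))
  have hg : Antitone g := cvol_antitone hc hℓsymm hℓtri
  have hgpos (ρ : ℝ) : 0 < g ρ := hβ.trans_le (le_cvol hc hℓnn ρ)
  have hψ : MonotoneOn ψ (uIcc a b) := by
    rw [uIcc_of_le hab.le]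
    exact (antitoneOn_log_log_exp_one_mul_div (g a)).comp (hg.antitoneOn _)
      fun ρ hρ => ⟨hgpos ρ, hg hρ.1⟩
  have hderiv : ∀ᵐ ρ, ρ ∈ uIoc a b →
      (∑ p ∈ bdry ℓ S F z ρ, c p) / (g ρ * log (exp 1 * g a / g ρ)) = deriv ψ ρ := by
    filter_upwards [compl_mem_ae_iff.2 ((S.image (ℓ z)).finite_toSet.measure_zero volume)]
      with ρ hρ hρab
    rw [uIoc_of_le hab.le] at hρab
    rw [(hasDerivAt_log_log_exp_one_mul_div (hasDerivAt_cvol hρ) (hgpos ρ) (hg hρab.1.le)).deriv,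
      neg_neg]
  calc _ = ∫ ρ in a..b, deriv ψ ρ := intervalIntegral.integral_congr_ae hderiv
    _ ≤ ψ b - ψ a := by
      have := hψ.intervalIntegral_deriv_mem_uIcc
      rw [uIcc_of_le (sub_nonneg.2 (hψ left_mem_uIcc right_mem_uIcc hab.le))] at this
      exact this.2
    _ = ψ b := by
      rw [sub_eq_self]
      simp only [ψ, mul_div_assoc, div_self (hgpos a).ne', mul_one, log_exp, log_one]

/-- Region-growing lemma, complementary-volume bound:
`∫_a^b c(∂F(ρ)) / (cVol(ρ)·ln(e·cVol(a)/cVol(ρ))) dρ ≤ ln ln (e·cVol(a)/cVol(b))`. -/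
theorem stmt_4 [Fintype V] (E F : Finset (V × V)) (hFE : F ⊆ E)
    (c : V × V → ℝ) (hc : ∀ p, 0 ≤ c p)
    (ℓ : V → V → ℝ) (hℓ0 : ∀ v, ℓ v v = 0) (hℓnn : ∀ u v, 0 ≤ ℓ u v)
    (hℓsymm : ∀ u v, ℓ u v = ℓ v u)
    (hℓtri : ∀ u v w, ℓ u w ≤ ℓ u v + ℓ v w)
    (S : Finset V) (z : V) (β : ℝ) (hβ : 0 < β)
    (a b : ℝ) (ha : 0 ≤ a) (hab : a < b) :
    (∫ ρ in a..b, (∑ p ∈ bdry ℓ S F z ρ, c p) /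
        (cvol c ℓ S F z β ρ * Real.log (Real.exp 1 * cvol c ℓ S F z β a / cvol c ℓ S F z β ρ))) ≤
      Real.log (Real.log (Real.exp 1 * cvol c ℓ S F z β a / cvol c ℓ S F z β b)) :=
  stmt_4_general F c hc ℓ hℓnn hℓsymm hℓtri S z β hβ a b hab

end RegionGrow
end

section
/- Region growing for the multicut LP metrics: in the subdivided LP setup, for every S ⊆ V, every z ∈ V, and every α ∈ (0,1), setting q = ⌈(k−1)/α⌉, there exists ρ₁ ∈ [0,1) such that both c^q(∂(ρ₁)) ≤ (2/(1−α)) · Vol(ρ₁) · ln( e·V^x(S)/Vol(ρ₁) ) · ln ln( e(r+1) ) and c^q(∂(ρ₁)) ≤ (2/(1−α)) · cVol(ρ₁) · ln( e·V^x(S)/cVol(ρ₁) ) · ln ln( e(r+1) ). -/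
open scoped Classical

namespace SubdividedLP

variable {V : Type*}

/-- The smaller of the two values of `g` at the endpoints of an edge. -/
noncomputable def dmin (g : V → ℝ) : Sym2 V → ℝ :=
  Sym2.lift ⟨fun a b => min (g a) (g b), fun a b => min_comm _ _⟩

/-- The larger of the two values of `g` at the endpoints of an edge. -/
noncomputable def dmax (g : V → ℝ) : Sym2 V → ℝ :=
  Sym2.lift ⟨fun a b => max (g a) (g b), fun a b => max_comm _ _⟩

/-- The value `ℓ(u,v)` of a symmetric function `ℓ` on an edge `{u,v}` (written in a
symmetrized form so that it is well defined on `Sym2 V`; it equals `ℓ u v` whenever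
`ℓ` is symmetric). -/
noncomputable def elen (ℓ : V → V → ℝ) : Sym2 V → ℝ :=
  Sym2.lift ⟨fun a b => (ℓ a b + ℓ b a) / 2, fun a b => by dsimp only; rw [add_comm]⟩

/-- The ball `B^S(z,ρ)` (w.r.t. the distance function `g = ℓ(z,·)`). -/
noncomputable def ball (g : V → ℝ) (S : Finset V) (ρ : ℝ) : Finset V :=
  S.filter fun v => g v ≤ ρ

/-- The boundary `∂(ρ)`: edges of `G` with both endpoints in `S`, exactly one of which
is in the ball of radius `ρ` (equivalently, `min` of the endpoint distances is `≤ ρ`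
and `max` is `> ρ`). -/
noncomputable def bdry [Fintype V] [DecidableEq V] (G : SimpleGraph V) [DecidableRel G.Adj]
    (g : V → ℝ) (S : Finset V) (ρ : ℝ) : Finset (Sym2 V) :=
  G.edgeFinset.filter fun e => (∀ w ∈ e, w ∈ S) ∧ dmin g e ≤ ρ ∧ ρ < dmax g e

/-- The volume `𝒱^{S,x}(z,ρ)`: `β` plus the contribution `c_e·ℓ(u,v)` of the `F`-edges
inside the ball, plus `c_e·(ρ - ℓ(z,u))` for each `F`-edge crossing the boundary
(`u` being its endpoint inside the ball). -/
noncomputable def vol [Fintype V] [DecidableEq V] (G : SimpleGraph V) [DecidableRel G.Adj]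
    (c : Sym2 V → ℝ) (ℓ : V → V → ℝ) (F : Finset (Sym2 V)) (S : Finset V) (z : V)
    (β ρ : ℝ) : ℝ :=
  β + ∑ e ∈ F.filter (fun e => ∀ w ∈ e, w ∈ ball (ℓ z) S ρ), c e * elen ℓ e
    + ∑ e ∈ bdry G (ℓ z) S ρ ∩ F, c e * (ρ - dmin (ℓ z) e)

/-- The complementary volume `𝒱̄^{S,x}(z,ρ)`. -/
noncomputable def cvol [Fintype V] [DecidableEq V] (G : SimpleGraph V) [DecidableRel G.Adj]
    (c : Sym2 V → ℝ) (ℓ : V → V → ℝ) (F : Finset (Sym2 V)) (S : Finset V) (z : V)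
    (β ρ : ℝ) : ℝ :=
  β + ∑ e ∈ F.filter (fun e => ∀ w ∈ e, w ∈ S ∧ w ∉ ball (ℓ z) S ρ), c e * elen ℓ e
    + ∑ e ∈ bdry G (ℓ z) S ρ ∩ F, c e * (dmax (ℓ z) e - ρ)

/-- `𝒱^x(S) = β + Σ_{e ∈ E(S)} c_e x_e`. -/
noncomputable def Vx [Fintype V] [DecidableEq V] (G : SimpleGraph V) [DecidableRel G.Adj]
    (c x : Sym2 V → ℝ) (S : Finset V) (β : ℝ) : ℝ :=
  β + ∑ e ∈ G.edgeFinset.filter (fun e => ∀ w ∈ e, w ∈ S), c e * x e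

/-- `c^q(A)`: the total cost of all but the `q-1` most expensive edges of `A`
(equivalently, the minimum cost of a subset of `A` of size `|A| - (q-1)`);
it is `0` if `|A| < q`. -/
noncomputable def cq (c : Sym2 V → ℝ) (q : ℕ) (A : Finset (Sym2 V)) : ℝ :=
  if A.card < q then 0
  else sInf ((fun B : Finset (Sym2 V) => ∑ e ∈ B, c e) ''
    {B : Finset (Sym2 V) | B ⊆ A ∧ B.card + (q - 1) = A.card})

/-! With `W = 𝒱^x(S)`, the potential `Φ(v) = log log (e W / v)` has derivative
`-1 / (v log (e W / v))`. The endpoint distances of the edges cut `[0, 1]` into pieces on which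
`∂(ρ)` is constant and `Vol`, `cVol` are affine with slopes `± c(∂ ∩ F)`, jumping only in their
monotone direction at the breakpoints. An `H`-edge lies on `∂(ρ)` only for `ρ` in an interval of
length at most `y_e`, so the pieces whose boundary holds `q` or more `H`-edges have total length
at most `Σ y_e / q ≤ α`. On every other piece `c^q(∂) ≤ c(∂ ∩ F)`, so if both bounds failed
throughout a piece, the mean value theorem would make `Φ(Vol) - Φ(cVol)` drop faster than
`a = 2 log log (e (r + 1)) / (1 - α)` there. But its total drop over `[0, 1]` is at most
`2 Φ(β) ≤ 2 log log (e (r + 1))`, because `𝒱^x(S) ≤ (r + 1) β`, so averaging over these pieces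
finds one where both bounds hold somewhere. -/

open Real Finset

noncomputable def potential (W v : ℝ) : ℝ := log (log (exp 1 * W / v))

noncomputable def weight (W v : ℝ) : ℝ := v * log (exp 1 * W / v)

section Potential

variable {W v v' : ℝ}

lemma one_le_log_exp_mul_div (hv : 0 < v) (hvW : v ≤ W) : 1 ≤ log (exp 1 * W / v) := by
  have hW := hv.trans_le hvW
  rw [le_log_iff_exp_le (by positivity), le_div_iff₀ hv]
  nlinarith [exp_pos 1]

lemma weight_pos (hv : 0 < v) (hvW : v ≤ W) : 0 < weight W v :=
  mul_pos hv (by linarith [one_le_log_exp_mul_div hv hvW])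

lemma potential_nonneg (hv : 0 < v) (hvW : v ≤ W) : 0 ≤ potential W v :=
  log_nonneg (one_le_log_exp_mul_div hv hvW)

lemma potential_le_potential (hv : 0 < v) (hvv' : v ≤ v') (hv'W : v' ≤ W) :
    potential W v' ≤ potential W v := by
  have hv' := hv.trans_le hvv'
  have hW := hv'.trans_le hv'W
  refine log_le_log (by linarith [one_le_log_exp_mul_div hv' hv'W]) (log_le_log (by positivity) ?_)
  exact div_le_div_of_nonneg_left (by positivity) hv hvv'

lemma hasDerivAt_potential (hv : 0 < v) (hvW : v ≤ W) :
    HasDerivAt (potential W) (-(weight W v)⁻¹) v := by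
  have hW := hv.trans_le hvW
  have hlog := one_le_log_exp_mul_div hv hvW
  unfold potential weight
  have hquot : HasDerivAt (fun v => exp 1 * W / v) (-(exp 1 * W) / v ^ 2) v := by
    simpa [div_eq_mul_inv] using (hasDerivAt_inv hv.ne').const_mul (exp 1 * W)
  convert (hquot.log (by positivity)).log (by positivity) using 1
  field_simp

lemma potential_le_log_log {R β : ℝ} (hβ : 0 < β) (hβW : β ≤ W) (hWR : W ≤ R * β) :
    potential W β ≤ log (log (exp 1 * R)) := by
  have hW := hβ.trans_le hβW
  refine log_le_log (by linarith [one_le_log_exp_mul_div hβ hβW]) (log_le_log (by positivity) ?_)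
  rw [div_le_iff₀ hβ, mul_assoc]
  exact mul_le_mul_of_nonneg_left hWR (exp_pos 1).le

lemma exists_le_weight_of_potential_sub_le {a κ w d : ℝ} (hd : 0 < d) (hκ : 0 ≤ κ)
    (hv : 0 < v) (hvW : v + κ * d ≤ W) (hw : 0 < w - κ * d) (hwW : w ≤ W)
    (h : potential W v - potential W (v + κ * d) + (potential W (w - κ * d) - potential W w)
      ≤ a * d) :
    ∃ s ∈ Set.Ioo 0 d, κ ≤ a * weight W (v + κ * s) ∧ κ ≤ a * weight W (w - κ * s) := by
  by_contra! hlarge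
  have hvs : ∀ s ∈ Set.Icc 0 d, 0 < v + κ * s ∧ v + κ * s ≤ W := fun s hs =>
    ⟨by nlinarith [hs.1], by nlinarith [hs.2]⟩
  have hws : ∀ s ∈ Set.Icc 0 d, 0 < w - κ * s ∧ w - κ * s ≤ W := fun s hs =>
    ⟨by nlinarith [hs.2], by nlinarith [hs.1]⟩
  have hderiv : ∀ s ∈ Set.Icc 0 d, HasDerivAt
      (fun s => potential W (v + κ * s) - potential W (w - κ * s))
      (-(weight W (v + κ * s))⁻¹ * κ - -(weight W (w - κ * s))⁻¹ * -κ) s := by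
    intro s hs
    have hv' : HasDerivAt (fun s => v + κ * s) κ s := by
      simpa using ((hasDerivAt_id s).const_mul κ).const_add v
    have hw' : HasDerivAt (fun s => w - κ * s) (-κ) s := by
      simpa using ((hasDerivAt_id s).const_mul κ).const_sub w
    exact ((hasDerivAt_potential (hvs s hs).1 (hvs s hs).2).comp s hv').sub
      ((hasDerivAt_potential (hws s hs).1 (hws s hs).2).comp s hw')
  obtain ⟨ξ, hξ, hslope⟩ := exists_hasDerivAt_eq_slope _ _ hd
    (fun s hs => (hderiv s hs).continuousAt.continuousWithinAt)
    (fun s hs => hderiv s (Set.Ioo_subset_Icc_self hs))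
  have hξ' := Set.Ioo_subset_Icc_self hξ
  have hpv := weight_pos (hvs ξ hξ').1 (hvs ξ hξ').2
  have hpw := weight_pos (hws ξ hξ').1 (hws ξ hξ').2
  -- at `ξ` the slope `-κ / weight (v + κ ξ) - κ / weight (w - κ ξ)` is below `-a`, because one
  -- of the two bounds fails there
  have hsum : a < κ / weight W (v + κ * ξ) + κ / weight W (w - κ * ξ) := by
    rcases le_or_gt κ (a * weight W (v + κ * ξ)) with hκv | hκv
    · have := (lt_div_iff₀ hpw).2 (hlarge ξ hξ hκv)
      have := div_nonneg hκ hpv.le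
      linarith
    · have := (lt_div_iff₀ hpv).2 hκv
      have := div_nonneg hκ hpw.le
      linarith
  simp only [mul_zero, add_zero, sub_zero] at hslope
  rw [eq_div_iff hd.ne'] at hslope
  have hdrop : (κ / weight W (v + κ * ξ) + κ / weight W (w - κ * ξ)) * d ≤ a * d := by
    rw [div_eq_mul_inv, div_eq_mul_inv]
    linarith
  exact absurd hdrop (not_le.2 (mul_lt_mul_of_pos_right hsum hd))

lemma sum_range_potential_sub_le {v w : ℕ → ℝ} {n : ℕ} {β W : ℝ} (hβ : 0 < β)
    (hv : ∀ j ≤ n, β ≤ v j ∧ v j ≤ W) (hw : ∀ j ≤ n, β ≤ w j ∧ w j ≤ W) :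
    ∑ j ∈ range n, (potential W (v j) - potential W (v (j + 1)) +
      (potential W (w (j + 1)) - potential W (w j))) ≤ 2 * potential W β := by
  rw [sum_add_distrib, sum_range_sub' (fun j => potential W (v j)),
    sum_range_sub (fun j => potential W (w j))]
  have h1 := potential_le_potential hβ (hv 0 n.zero_le).1 (hv 0 n.zero_le).2
  have h2 := potential_nonneg (hβ.trans_le (hv n le_rfl).1) (hv n le_rfl).2
  have h3 := potential_le_potential hβ (hw n le_rfl).1 (hw n le_rfl).2
  have h4 := potential_nonneg (hβ.trans_le (hw 0 n.zero_le).1) (hw 0 n.zero_le).2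
  linarith

end Potential

lemma exists_not_le_mul_of_sum_le {ι : Type*} {s : Finset ι} {p : ι → Prop} [DecidablePred p]
    {len inc : ι → ℝ} {α M : ℝ} (hα : α < 1) (hinc : ∀ i ∈ s, 0 ≤ inc i)
    (hlen : ∑ i ∈ s, len i = 1) (hp : ∑ i ∈ s with p i, len i ≤ α) (hM : ∑ i ∈ s, inc i ≤ M) :
    ∃ i ∈ s, ¬ p i ∧ inc i ≤ M / (1 - α) * len i := by
  have hsplit := sum_filter_add_sum_filter_not s p len
  have hgood : 1 - α ≤ ∑ i ∈ s with ¬ p i, len i := by linarith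
  have hM0 : 0 ≤ M := (sum_nonneg hinc).trans hM
  have hne : (s.filter fun i => ¬ p i).Nonempty :=
    nonempty_of_sum_ne_zero (f := len) (by linarith)
  have hle : ∑ i ∈ s with ¬ p i, inc i ≤ ∑ i ∈ s with ¬ p i, M / (1 - α) * len i := by
    rw [← mul_sum]
    calc ∑ i ∈ s with ¬ p i, inc i ≤ ∑ i ∈ s, inc i :=
          sum_le_sum_of_subset_of_nonneg (filter_subset _ _) fun i hi _ => hinc i hi
      _ ≤ M / (1 - α) * (1 - α) := by rw [div_mul_cancel₀ _ (by linarith)]; exact hM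
      _ ≤ _ := mul_le_mul_of_nonneg_left hgood (div_nonneg hM0 (by linarith))
  obtain ⟨i, hi, hle⟩ := exists_le_of_sum_le hne hle
  exact ⟨i, (mem_filter.1 hi).1, (mem_filter.1 hi).2, hle⟩

lemma sum_sub_le_of_mem_Icc {T : ℕ → ℝ} {n : ℕ} {p : ℕ → Prop} [DecidablePred p] {a b : ℝ}
    (hab : a ≤ b) (hT : ∀ j < n, T j ≤ T (j + 1))
    (hp : ∀ j < n, p j → a ≤ T j ∧ T (j + 1) ≤ b) :
    ∑ j ∈ range n with p j, (T (j + 1) - T j) ≤ b - a := by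
  -- clamping `T` to `[a, b]` changes none of the selected increments and keeps all increments
  -- nonnegative; the clamped increments telescope to at most `b - a`
  set C : ℕ → ℝ := fun j => min (max (T j) a) b
  calc ∑ j ∈ range n with p j, (T (j + 1) - T j)
      = ∑ j ∈ range n with p j, (C (j + 1) - C j) := by
        refine sum_congr rfl fun j hj => ?_
        obtain ⟨hj, hpj⟩ := mem_filter.1 hj
        obtain ⟨h1, h2⟩ := hp j (mem_range.1 hj) hpj
        have := hT j (mem_range.1 hj)
        simp only [C, max_eq_left h1, max_eq_left (h1.trans this), min_eq_left h2,
          min_eq_left ((this.trans h2))]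
    _ ≤ ∑ j ∈ range n, (C (j + 1) - C j) :=
        sum_le_sum_of_subset_of_nonneg (filter_subset _ _) fun j hj _ =>
          sub_nonneg.2 (min_le_min_right _ (max_le_max_right _ (hT j (mem_range.1 hj))))
    _ = C n - C 0 := sum_range_sub C n
    _ ≤ b - a := by
        have : C n ≤ b := min_le_right _ _
        have : a ≤ C 0 := le_min (le_max_right _ _) hab
        linarith

lemma sum_card_inter_mul {ι α : Type*} [DecidableEq α] (s : Finset ι) (A : ι → Finset α)
    (H : Finset α) (w : ι → ℝ) :
    ∑ i ∈ s, ((A i ∩ H).card : ℝ) * w i = ∑ a ∈ H, ∑ i ∈ s with a ∈ A i, w i := by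
  simp_rw [sum_filter]
  rw [sum_comm]
  refine sum_congr rfl fun i _ => ?_
  rw [← sum_filter, sum_const, nsmul_eq_mul, filter_mem_eq_inter, inter_comm]

lemma exists_partition_of_subset_Icc {P : Finset ℝ} (hP : ∀ p ∈ P, p ∈ Set.Icc (0 : ℝ) 1)
    (h0 : 0 ∈ P) (h1 : 1 ∈ P) :
    ∃ (n : ℕ) (T : ℕ → ℝ), T 0 = 0 ∧ T n = 1 ∧ (∀ j < n, T j < T (j + 1)) ∧
      (∀ j ≤ n, T j ∈ P) ∧ ∀ j < n, ∀ p ∈ P, p ∉ Set.Ioo (T j) (T (j + 1)) := by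
  set m := P.card
  have hm : 0 < m := card_pos.2 ⟨0, h0⟩
  set T : ℕ → ℝ := fun j => if h : j < m then P.orderEmbOfFin rfl ⟨j, h⟩ else 1
  have hT (j : ℕ) (h : j < m) : T j = P.orderEmbOfFin rfl ⟨j, h⟩ := dif_pos h
  refine ⟨m - 1, T, ?_, ?_, fun j hj => ?_, fun j hj => ?_, fun j hj p hp hpj => ?_⟩
  · rw [hT 0 hm, orderEmbOfFin_zero rfl hm]
    exact le_antisymm (min'_le _ _ h0) (le_min' _ _ _ fun p hp => (hP p hp).1)
  · rw [hT _ (by omega), orderEmbOfFin_last rfl hm]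
    exact le_antisymm (max'_le _ _ _ fun p hp => (hP p hp).2) (le_max' _ _ h1)
  · rw [hT j (by omega), hT (j + 1) (by omega)]
    exact (P.orderEmbOfFin rfl).strictMono (Fin.mk_lt_mk.2 (Nat.lt_succ_self j))
  · rw [hT j (by omega)]
    exact orderEmbOfFin_mem _ _ _
  · obtain ⟨i, rfl⟩ : ∃ i, P.orderEmbOfFin rfl i = p := by
      rw [← Set.mem_range, range_orderEmbOfFin]
      exact hp
    rw [hT j (by omega), hT (j + 1) (by omega)] at hpj
    have h1 := (P.orderEmbOfFin rfl).lt_iff_lt.1 hpj.1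
    have h2 := (P.orderEmbOfFin rfl).lt_iff_lt.1 hpj.2
    rw [Fin.lt_def] at h1 h2
    simp only at h1 h2
    omega

lemma exists_partition (D : Finset ℝ) :
    ∃ (n : ℕ) (T : ℕ → ℝ), T 0 = 0 ∧ T n = 1 ∧ (∀ j < n, T j < T (j + 1)) ∧
      (∀ j ≤ n, T j ∈ Set.Icc 0 1) ∧ ∀ j < n, ∀ d ∈ D, d ∉ Set.Ioo (T j) (T (j + 1)) := by
  set P : Finset ℝ := insert 0 (insert 1 (D.filter (· ∈ Set.Icc 0 1)))
  have hP : ∀ p ∈ P, p ∈ Set.Icc (0 : ℝ) 1 := by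
    intro p hp
    rcases mem_insert.1 hp with rfl | hp
    · exact ⟨le_rfl, zero_le_one⟩
    rcases mem_insert.1 hp with rfl | hp
    · exact ⟨zero_le_one, le_rfl⟩
    exact (mem_filter.1 hp).2
  obtain ⟨n, T, hT0, hTn, hT, hTP, hgap⟩ :=
    exists_partition_of_subset_Icc hP (mem_insert_self _ _)
      (mem_insert_of_mem (mem_insert_self _ _))
  refine ⟨n, T, hT0, hTn, hT, fun j hj => hP _ (hTP j hj), fun j hj d hd hdj => ?_⟩
  refine hgap j hj d (mem_insert_of_mem (mem_insert_of_mem (mem_filter.2 ⟨hd, ?_⟩))) hdj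
  exact ⟨(hP _ (hTP j hj.le)).1.trans hdj.1.le, hdj.2.le.trans (hP _ (hTP (j + 1) hj)).2⟩

-- The share in `vol` (resp. `cvol`) at radius `ρ` of an edge of cost `cv` and length `ev` whose
-- endpoints are at distances `dn ≤ dx` from the centre.
noncomputable def volTerm (cv ev dn dx ρ : ℝ) : ℝ :=
  if dx ≤ ρ then cv * ev else if dn ≤ ρ then cv * (ρ - dn) else 0

noncomputable def cvolTerm (cv ev dn dx ρ : ℝ) : ℝ :=
  if dx ≤ ρ then 0 else if dn ≤ ρ then cv * (dx - ρ) else cv * ev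

section EdgeTerms

variable {cv ev dn dx t u ρ : ℝ}

lemma volTerm_nonneg (hcv : 0 ≤ cv) (hev : 0 ≤ ev) : 0 ≤ volTerm cv ev dn dx ρ := by
  unfold volTerm
  split_ifs with h1 h2
  · exact mul_nonneg hcv hev
  · exact mul_nonneg hcv (sub_nonneg.2 h2)
  · exact le_rfl

lemma cvolTerm_nonneg (hcv : 0 ≤ cv) (hev : 0 ≤ ev) : 0 ≤ cvolTerm cv ev dn dx ρ := by
  unfold cvolTerm
  split_ifs with h1
  · exact le_rfl
  · exact mul_nonneg hcv (sub_nonneg.2 (not_le.1 h1).le)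
  · exact mul_nonneg hcv hev

lemma volTerm_le (hcv : 0 ≤ cv) (hev : 0 ≤ ev) (hlip : dn ≤ ρ → dx ≤ dn + ev) :
    volTerm cv ev dn dx ρ ≤ cv * ev := by
  unfold volTerm; split_ifs with h1 h2
  · exact le_rfl
  · exact mul_le_mul_of_nonneg_left (by linarith [hlip h2]) hcv
  · positivity

lemma cvolTerm_le (hcv : 0 ≤ cv) (hev : 0 ≤ ev) (hlip : dn ≤ ρ → dx ≤ dn + ev) :
    cvolTerm cv ev dn dx ρ ≤ cv * ev := by
  unfold cvolTerm; split_ifs with h1 h2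
  · positivity
  · exact mul_le_mul_of_nonneg_left (by linarith [hlip h2]) hcv
  · exact le_rfl

lemma position_of_not_mem_Ioo (hdn : dn ∉ Set.Ioo t u) (hdx : dx ∉ Set.Ioo t u) :
    dx ≤ t ∨ (dn ≤ t ∧ u ≤ dx) ∨ (u ≤ dn ∧ u ≤ dx) := by
  simp only [Set.mem_Ioo, not_and_or, not_lt] at hdn hdx
  rcases hdx with hdx | hdx
  · exact Or.inl hdx
  · rcases hdn with hdn | hdn
    · exact Or.inr (Or.inl ⟨hdn, hdx⟩)
    · exact Or.inr (Or.inr ⟨hdn, hdx⟩)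

lemma crosses_iff (hdn : dn ∉ Set.Ioo t u) (hdx : dx ∉ Set.Ioo t u) (ht : t ≤ ρ) (hρ : ρ < u) :
    dn ≤ ρ ∧ ρ < dx ↔ dn ≤ t ∧ t < dx := by
  rcases position_of_not_mem_Ioo hdn hdx with hx | ⟨hn, hx⟩ | ⟨hn, hx⟩
  · exact ⟨fun h => by linarith [h.2], fun h => by linarith [h.2]⟩
  · exact ⟨fun _ => ⟨hn, by linarith⟩, fun _ => ⟨by linarith, by linarith⟩⟩
  · exact ⟨fun h => by linarith [h.1], fun h => by linarith [h.1]⟩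

lemma volTerm_eq_add (hdn : dn ∉ Set.Ioo t u) (hdx : dx ∉ Set.Ioo t u) (ht : t ≤ ρ)
    (hρ : ρ < u) :
    volTerm cv ev dn dx ρ =
      volTerm cv ev dn dx t + (if dn ≤ t ∧ t < dx then cv else 0) * (ρ - t) := by
  rcases position_of_not_mem_Ioo hdn hdx with hx | ⟨hn, hx⟩ | ⟨hn, hx⟩
  · rw [if_neg fun h => by linarith [h.2]]
    unfold volTerm; split_ifs <;> first | ring1 | (exfalso; linarith)
  · rw [if_pos ⟨hn, by linarith⟩]
    unfold volTerm; split_ifs <;> first | ring1 | (exfalso; linarith)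
  · rw [if_neg fun h => by linarith [h.1]]
    unfold volTerm; split_ifs <;> first | ring1 | (exfalso; linarith)

lemma cvolTerm_eq_sub (hdn : dn ∉ Set.Ioo t u) (hdx : dx ∉ Set.Ioo t u) (ht : t ≤ ρ)
    (hρ : ρ < u) :
    cvolTerm cv ev dn dx ρ =
      cvolTerm cv ev dn dx t - (if dn ≤ t ∧ t < dx then cv else 0) * (ρ - t) := by
  rcases position_of_not_mem_Ioo hdn hdx with hx | ⟨hn, hx⟩ | ⟨hn, hx⟩
  · rw [if_neg fun h => by linarith [h.2]]
    unfold cvolTerm; split_ifs <;> first | ring1 | (exfalso; linarith)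
  · rw [if_pos ⟨hn, by linarith⟩]
    unfold cvolTerm; split_ifs <;> first | ring1 | (exfalso; linarith)
  · rw [if_neg fun h => by linarith [h.1]]
    unfold cvolTerm; split_ifs <;> first | ring1 | (exfalso; linarith)

lemma volTerm_add_le (hcv : 0 ≤ cv) (hev : 0 ≤ ev) (hdn : dn ∉ Set.Ioo t u)
    (hdx : dx ∉ Set.Ioo t u) (htu : t < u) (hlip : dn ≤ u → dx ≤ dn + ev) :
    volTerm cv ev dn dx t + (if dn ≤ t ∧ t < dx then cv else 0) * (u - t) ≤
      volTerm cv ev dn dx u := by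
  rcases position_of_not_mem_Ioo hdn hdx with hx | ⟨hn, hx⟩ | ⟨hn, hx⟩
  · rw [if_neg fun h => by linarith [h.2]]
    unfold volTerm; split_ifs <;> linarith
  · rw [if_pos ⟨hn, by linarith⟩]
    have := hlip (by linarith)
    unfold volTerm; split_ifs <;> first | (exfalso; linarith) | nlinarith
  · rw [if_neg fun h => by linarith [h.1]]
    unfold volTerm; split_ifs <;> first | (exfalso; linarith) | nlinarith

lemma cvolTerm_le_sub (hcv : 0 ≤ cv) (hev : 0 ≤ ev) (hdn : dn ∉ Set.Ioo t u)
    (hdx : dx ∉ Set.Ioo t u) (htu : t < u) (hlip : dn ≤ u → dx ≤ dn + ev) :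
    cvolTerm cv ev dn dx u ≤
      cvolTerm cv ev dn dx t - (if dn ≤ t ∧ t < dx then cv else 0) * (u - t) := by
  rcases position_of_not_mem_Ioo hdn hdx with hx | ⟨hn, hx⟩ | ⟨hn, hx⟩
  · rw [if_neg fun h => by linarith [h.2]]
    unfold cvolTerm; split_ifs <;> linarith
  · rw [if_pos ⟨hn, by linarith⟩]
    unfold cvolTerm; split_ifs <;> first | (exfalso; linarith) | nlinarith
  · rw [if_neg fun h => by linarith [h.1]]
    unfold cvolTerm
    split_ifs <;> first | (exfalso; linarith) | nlinarith | nlinarith [hlip ‹dn ≤ u›]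

end EdgeTerms

noncomputable def edgesIn (F : Finset (Sym2 V)) (S : Finset V) : Finset (Sym2 V) :=
  F.filter fun e => ∀ w ∈ e, w ∈ S

section Volumes

variable {G : SimpleGraph V} {c : Sym2 V → ℝ} {ℓ : V → V → ℝ} {F : Finset (Sym2 V)}
  {S : Finset V} {z : V} {β : ℝ} {g : V → ℝ} {e : Sym2 V} {ρ t u : ℝ}

lemma dmax_le_iff : dmax g e ≤ ρ ↔ ∀ w ∈ e, g w ≤ ρ := by
  induction e using Sym2.ind with | _ a b => simp [dmax]

lemma lt_dmin_iff : ρ < dmin g e ↔ ∀ w ∈ e, ρ < g w := by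
  induction e using Sym2.ind with | _ a b => simp [dmin]

lemma dmin_le_dmax : dmin g e ≤ dmax g e := by
  induction e using Sym2.ind with | _ a b => exact min_le_max

variable [Fintype V] [DecidableRel G.Adj]

lemma edge_of_mem_edgesIn (hFE : F ⊆ G.edgeFinset) (he : e ∈ edgesIn F S) : e ∈ G.edgeFinset := by
  simp only [edgesIn, mem_filter] at he
  exact hFE he.1

variable [DecidableEq V]

lemma mem_bdry :
    e ∈ bdry G g S ρ ↔ e ∈ G.edgeFinset ∧ (∀ w ∈ e, w ∈ S) ∧ dmin g e ≤ ρ ∧ ρ < dmax g e := by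
  simp only [bdry, mem_filter]

lemma bdry_inter_eq (hFE : F ⊆ G.edgeFinset) :
    bdry G g S ρ ∩ F = (edgesIn F S).filter fun e => dmin g e ≤ ρ ∧ ρ < dmax g e := by
  ext e
  simp only [mem_inter, mem_bdry, edgesIn, mem_filter]
  exact ⟨fun h => ⟨⟨h.2, h.1.2.1⟩, h.1.2.2⟩, fun h => ⟨⟨hFE h.1.1, h.1.2, h.2⟩, h.1.1⟩⟩

lemma vol_eq_sum (hFE : F ⊆ G.edgeFinset) (ρ : ℝ) :
    vol G c ℓ F S z β ρ = β + ∑ e ∈ edgesIn F S,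
      volTerm (c e) (elen ℓ e) (dmin (ℓ z) e) (dmax (ℓ z) e) ρ := by
  have hin : F.filter (fun e => ∀ w ∈ e, w ∈ ball (ℓ z) S ρ) =
      (edgesIn F S).filter fun e => dmax (ℓ z) e ≤ ρ := by
    ext e
    simp only [edgesIn, ball, mem_filter, dmax_le_iff, ← forall_and, and_assoc]
  simp only [volTerm, sum_ite, sum_const_zero, add_zero, filter_filter, vol, add_assoc, hin,
    bdry_inter_eq hFE, not_le, and_comm]

lemma cvol_eq_sum (hFE : F ⊆ G.edgeFinset) (ρ : ℝ) :
    cvol G c ℓ F S z β ρ = β + ∑ e ∈ edgesIn F S,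
      cvolTerm (c e) (elen ℓ e) (dmin (ℓ z) e) (dmax (ℓ z) e) ρ := by
  have hout : F.filter (fun e => ∀ w ∈ e, w ∈ S ∧ w ∉ ball (ℓ z) S ρ) =
      (edgesIn F S).filter fun e => ρ < dmin (ℓ z) e := by
    ext e
    simp only [edgesIn, ball, mem_filter, lt_dmin_iff, ← forall_and, and_assoc, not_and, not_le]
    refine and_congr_right fun _ => forall₂_congr fun w _ => ?_
    exact ⟨fun h => ⟨h.1, h.2 h.1⟩, fun h => ⟨h.1, fun _ => h.2⟩⟩
  rw [cvol, hout, bdry_inter_eq hFE, add_assoc, add_comm (∑ e ∈ _ with _, _)]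
  simp only [cvolTerm, sum_ite, sum_const_zero, zero_add, filter_filter]
  congr 2 <;> refine sum_congr (filter_congr fun e _ => ?_) fun _ _ => rfl
  · exact and_comm.trans (and_congr_left' not_le.symm)
  · have := dmin_le_dmax (g := ℓ z) (e := e)
    constructor
    · intro h; constructor <;> intro h' <;> linarith
    · intro h; exact not_le.1 h.2

lemma sum_crossing_eq (hFE : F ⊆ G.edgeFinset) :
    ∑ e ∈ edgesIn F S, (if dmin g e ≤ t ∧ t < dmax g e then c e else 0) =
      ∑ e ∈ bdry G g S t ∩ F, c e := by
  rw [bdry_inter_eq hFE, sum_filter]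

lemma bdry_eq_of_forall_not_mem_Ioo
    (hbreak : ∀ e ∈ G.edgeFinset, dmin g e ∉ Set.Ioo t u ∧ dmax g e ∉ Set.Ioo t u)
    (ht : t ≤ ρ) (hρ : ρ < u) : bdry G g S ρ = bdry G g S t := by
  ext e
  simp only [mem_bdry]
  refine and_congr_right fun he => and_congr_right fun _ => ?_
  exact crosses_iff (hbreak e he).1 (hbreak e he).2 ht hρ

lemma le_vol (hFE : F ⊆ G.edgeFinset) (hc : ∀ e, 0 ≤ c e)
    (hev : ∀ e ∈ G.edgeFinset, 0 ≤ elen ℓ e) : β ≤ vol G c ℓ F S z β ρ := by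
  rw [vol_eq_sum hFE, le_add_iff_nonneg_right]
  exact sum_nonneg fun e he => volTerm_nonneg (hc e) (hev e (edge_of_mem_edgesIn hFE he))

lemma le_cvol (hFE : F ⊆ G.edgeFinset) (hc : ∀ e, 0 ≤ c e)
    (hev : ∀ e ∈ G.edgeFinset, 0 ≤ elen ℓ e) : β ≤ cvol G c ℓ F S z β ρ := by
  rw [cvol_eq_sum hFE, le_add_iff_nonneg_right]
  exact sum_nonneg fun e he => cvolTerm_nonneg (hc e) (hev e (edge_of_mem_edgesIn hFE he))

lemma vol_le (hFE : F ⊆ G.edgeFinset) (hc : ∀ e, 0 ≤ c e)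
    (hev : ∀ e ∈ G.edgeFinset, 0 ≤ elen ℓ e)
    (hlip : ∀ e ∈ G.edgeFinset, dmin (ℓ z) e ≤ 1 → dmax (ℓ z) e ≤ dmin (ℓ z) e + elen ℓ e)
    (hρ : ρ ≤ 1) : vol G c ℓ F S z β ρ ≤ β + ∑ e ∈ edgesIn F S, c e * elen ℓ e := by
  rw [vol_eq_sum hFE, add_le_add_iff_left]
  refine sum_le_sum fun e he => ?_
  have he' := edge_of_mem_edgesIn hFE he
  exact volTerm_le (hc e) (hev e he') fun h => hlip e he' (h.trans hρ)

lemma cvol_le (hFE : F ⊆ G.edgeFinset) (hc : ∀ e, 0 ≤ c e)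
    (hev : ∀ e ∈ G.edgeFinset, 0 ≤ elen ℓ e)
    (hlip : ∀ e ∈ G.edgeFinset, dmin (ℓ z) e ≤ 1 → dmax (ℓ z) e ≤ dmin (ℓ z) e + elen ℓ e)
    (hρ : ρ ≤ 1) : cvol G c ℓ F S z β ρ ≤ β + ∑ e ∈ edgesIn F S, c e * elen ℓ e := by
  rw [cvol_eq_sum hFE, add_le_add_iff_left]
  refine sum_le_sum fun e he => ?_
  have he' := edge_of_mem_edgesIn hFE he
  exact cvolTerm_le (hc e) (hev e he') fun h => hlip e he' (h.trans hρ)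

lemma vol_eq_add (hFE : F ⊆ G.edgeFinset)
    (hbreak : ∀ e ∈ G.edgeFinset, dmin (ℓ z) e ∉ Set.Ioo t u ∧ dmax (ℓ z) e ∉ Set.Ioo t u)
    (ht : t ≤ ρ) (hρ : ρ < u) :
    vol G c ℓ F S z β ρ =
      vol G c ℓ F S z β t + (∑ e ∈ bdry G (ℓ z) S t ∩ F, c e) * (ρ - t) := by
  rw [vol_eq_sum hFE, vol_eq_sum hFE, ← sum_crossing_eq hFE, sum_mul, add_assoc,
    ← sum_add_distrib]
  refine congrArg _ (sum_congr rfl fun e he => ?_)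
  have hb := hbreak e (edge_of_mem_edgesIn hFE he)
  exact volTerm_eq_add hb.1 hb.2 ht hρ

lemma cvol_eq_sub (hFE : F ⊆ G.edgeFinset)
    (hbreak : ∀ e ∈ G.edgeFinset, dmin (ℓ z) e ∉ Set.Ioo t u ∧ dmax (ℓ z) e ∉ Set.Ioo t u)
    (ht : t ≤ ρ) (hρ : ρ < u) :
    cvol G c ℓ F S z β ρ =
      cvol G c ℓ F S z β t - (∑ e ∈ bdry G (ℓ z) S t ∩ F, c e) * (ρ - t) := by
  rw [cvol_eq_sum hFE, cvol_eq_sum hFE, ← sum_crossing_eq hFE, sum_mul, add_sub_assoc,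
    ← sum_sub_distrib]
  refine congrArg _ (sum_congr rfl fun e he => ?_)
  have hb := hbreak e (edge_of_mem_edgesIn hFE he)
  exact cvolTerm_eq_sub hb.1 hb.2 ht hρ

lemma vol_add_le (hFE : F ⊆ G.edgeFinset) (hc : ∀ e, 0 ≤ c e)
    (hev : ∀ e ∈ G.edgeFinset, 0 ≤ elen ℓ e)
    (hlip : ∀ e ∈ G.edgeFinset, dmin (ℓ z) e ≤ 1 → dmax (ℓ z) e ≤ dmin (ℓ z) e + elen ℓ e)
    (hbreak : ∀ e ∈ G.edgeFinset, dmin (ℓ z) e ∉ Set.Ioo t u ∧ dmax (ℓ z) e ∉ Set.Ioo t u)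
    (htu : t < u) (hu : u ≤ 1) :
    vol G c ℓ F S z β t + (∑ e ∈ bdry G (ℓ z) S t ∩ F, c e) * (u - t) ≤
      vol G c ℓ F S z β u := by
  rw [vol_eq_sum hFE, vol_eq_sum hFE, ← sum_crossing_eq hFE, sum_mul, add_assoc,
    ← sum_add_distrib, add_le_add_iff_left]
  refine sum_le_sum fun e he => ?_
  have he' := edge_of_mem_edgesIn hFE he
  exact volTerm_add_le (hc e) (hev e he') (hbreak e he').1 (hbreak e he').2 htu
    fun h => hlip e he' (h.trans hu)

lemma cvol_le_sub (hFE : F ⊆ G.edgeFinset) (hc : ∀ e, 0 ≤ c e)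
    (hev : ∀ e ∈ G.edgeFinset, 0 ≤ elen ℓ e)
    (hlip : ∀ e ∈ G.edgeFinset, dmin (ℓ z) e ≤ 1 → dmax (ℓ z) e ≤ dmin (ℓ z) e + elen ℓ e)
    (hbreak : ∀ e ∈ G.edgeFinset, dmin (ℓ z) e ∉ Set.Ioo t u ∧ dmax (ℓ z) e ∉ Set.Ioo t u)
    (htu : t < u) (hu : u ≤ 1) :
    cvol G c ℓ F S z β u ≤
      cvol G c ℓ F S z β t - (∑ e ∈ bdry G (ℓ z) S t ∩ F, c e) * (u - t) := by
  rw [cvol_eq_sum hFE, cvol_eq_sum hFE, ← sum_crossing_eq hFE, sum_mul, add_sub_assoc,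
    ← sum_sub_distrib, add_le_add_iff_left]
  refine sum_le_sum fun e he => ?_
  have he' := edge_of_mem_edgesIn hFE he
  exact cvolTerm_le_sub (hc e) (hev e he') (hbreak e he').1 (hbreak e he').2 htu
    fun h => hlip e he' (h.trans hu)

end Volumes

lemma cq_le_sum_inter [DecidableEq V] {c : Sym2 V → ℝ} {q : ℕ} {A F H : Finset (Sym2 V)}
    (hc : ∀ e, 0 ≤ c e) (hA : A ⊆ F ∪ H) (hH : (A ∩ H).card < q) :
    cq c q A ≤ ∑ e ∈ A ∩ F, c e := by
  unfold cq
  split_ifs with hq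
  · exact sum_nonneg fun e _ => hc e
  have hcard : A.card ≤ (A ∩ F).card + (A ∩ H).card := by
    refine (card_le_card ?_).trans (card_union_le _ _)
    rw [← inter_union_distrib_left]
    exact subset_inter subset_rfl hA
  obtain ⟨B, hBA, hB⟩ := exists_subset_card_eq (s := A ∩ F) (n := A.card - (q - 1)) (by omega)
  have hfin : {B : Finset (Sym2 V) | B ⊆ A ∧ B.card + (q - 1) = A.card}.Finite :=
    A.powerset.finite_toSet.subset fun B hB => mem_powerset.2 hB.1
  calc sInf _ ≤ ∑ e ∈ B, c e :=
        csInf_le (hfin.image _).bddBelow ⟨B, ⟨hBA.trans inter_subset_left, by omega⟩, rfl⟩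
    _ ≤ ∑ e ∈ A ∩ F, c e := sum_le_sum_of_subset_of_nonneg hBA fun e _ _ => hc e

section PathMetric

structure IsPathMetric (G : SimpleGraph V) (len : Sym2 V → ℝ) (ℓ : V → V → ℝ) : Prop where
  le_walk : ∀ u v (p : G.Walk u v), ℓ u v ≤ (p.edges.map len).sum
  exists_walk : ∀ u v, G.Reachable u v → ∃ p : G.Walk u v, ℓ u v = (p.edges.map len).sum

namespace IsPathMetric

variable {G : SimpleGraph V} {len : Sym2 V → ℝ} {ℓ : V → V → ℝ} {u v z : V} {e : Sym2 V}

lemma le_of_adj (h : IsPathMetric G len ℓ) (huv : G.Adj u v) : ℓ u v ≤ len s(u, v) := by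
  simpa using h.le_walk u v (.cons huv .nil)

lemma nonneg (h : IsPathMetric G len ℓ) (hlen : ∀ e, 0 ≤ len e) (huv : G.Reachable u v) :
    0 ≤ ℓ u v := by
  obtain ⟨p, hp⟩ := h.exists_walk u v huv
  rw [hp]
  exact List.sum_nonneg fun a ha => by
    obtain ⟨e, -, rfl⟩ := List.mem_map.1 ha
    exact hlen e

lemma symm (h : IsPathMetric G len ℓ) (huv : G.Reachable u v) : ℓ u v = ℓ v u := by
  have key {a b : V} (hab : G.Reachable a b) : ℓ a b ≤ ℓ b a := by
    obtain ⟨p, hp⟩ := h.exists_walk b a hab.symm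
    simpa [hp] using h.le_walk a b p.reverse
  exact (key huv).antisymm (key huv.symm)

lemma le_add_of_adj (h : IsPathMetric G len ℓ) (hzu : G.Reachable z u) (huv : G.Adj u v) :
    ℓ z v ≤ ℓ z u + ℓ u v := by
  obtain ⟨p, hp⟩ := h.exists_walk z u hzu
  obtain ⟨p', hp'⟩ := h.exists_walk u v huv.reachable
  simpa [hp, hp'] using h.le_walk z v (p.append p')

lemma elen_eq (h : IsPathMetric G len ℓ) (huv : G.Adj u v) : elen ℓ s(u, v) = ℓ u v := by
  simp only [elen, Sym2.lift_mk]
  rw [h.symm huv.reachable]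
  ring

lemma elen_nonneg (h : IsPathMetric G len ℓ) (hlen : ∀ e, 0 ≤ len e) (he : e ∈ G.edgeSet) :
    0 ≤ elen ℓ e := by
  induction e using Sym2.ind with
  | _ u v => rw [h.elen_eq he]; exact h.nonneg hlen (G.mem_edgeSet.1 he).reachable

lemma elen_le (h : IsPathMetric G len ℓ) (he : e ∈ G.edgeSet) : elen ℓ e ≤ len e := by
  induction e using Sym2.ind with
  | _ u v => rw [h.elen_eq he]; exact h.le_of_adj he

lemma dmax_le_dmin_add_elen (h : IsPathMetric G len ℓ) (hfar : ∀ v, ¬G.Reachable z v → 1 < ℓ z v)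
    (he : e ∈ G.edgeSet) (hd : dmin (ℓ z) e ≤ 1) : dmax (ℓ z) e ≤ dmin (ℓ z) e + elen ℓ e := by
  induction e using Sym2.ind with
  | _ u v =>
    have hreach {w : V} (hw : ℓ z w ≤ 1) : G.Reachable z w := by
      by_contra hw'
      linarith [hfar w hw']
    have huv : G.Adj u v := he
    rw [h.elen_eq huv]
    simp only [dmin, dmax, Sym2.lift_mk] at hd ⊢
    rcases le_total (ℓ z u) (ℓ z v) with huv' | huv'
    · rw [min_eq_left huv'] at hd ⊢
      rw [max_eq_right huv']
      exact h.le_add_of_adj (hreach hd) huv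
    · rw [min_eq_right huv'] at hd ⊢
      rw [max_eq_left huv', h.symm huv.reachable]
      exact h.le_add_of_adj (hreach hd) huv.symm

end IsPathMetric

end PathMetric

section Growing

variable [Fintype V] [DecidableEq V] {G : SimpleGraph V} [DecidableRel G.Adj]
  {c x y : Sym2 V → ℝ} {ℓ : V → V → ℝ} {F H : Finset (Sym2 V)} {S : Finset V} {z : V}
  {β ρ t u : ℝ}

lemma bdry_subset_union
    (hlip : ∀ e ∈ G.edgeFinset, dmin (ℓ z) e ≤ 1 → dmax (ℓ z) e ≤ dmin (ℓ z) e + elen ℓ e)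
    (hlen : ∀ e ∈ G.edgeFinset, elen ℓ e ≤ x e + y e) (hxF : ∀ e ∉ F, x e = 0)
    (hyH : ∀ e ∉ H, y e = 0) (hρ : ρ ≤ 1) : bdry G (ℓ z) S ρ ⊆ F ∪ H := by
  intro e he
  obtain ⟨heE, -, h1, h2⟩ := mem_bdry.1 he
  by_contra hFH
  rw [mem_union, not_or] at hFH
  have := hlen e heE
  rw [hxF e hFH.1, hyH e hFH.2] at this
  linarith [hlip e heE (h1.trans hρ)]

lemma add_sum_edgesIn_le_Vx (hFE : F ⊆ G.edgeFinset) (hc : ∀ e, 0 ≤ c e) (hx : ∀ e, 0 ≤ x e)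
    (hxF : ∀ e ∈ F, elen ℓ e ≤ x e) :
    β + ∑ e ∈ edgesIn F S, c e * elen ℓ e ≤ Vx G c x S β := by
  rw [Vx, add_le_add_iff_left]
  calc ∑ e ∈ edgesIn F S, c e * elen ℓ e ≤ ∑ e ∈ edgesIn F S, c e * x e := by
        refine sum_le_sum fun e he => mul_le_mul_of_nonneg_left (hxF e ?_) (hc e)
        simp only [edgesIn, mem_filter] at he
        exact he.1
    _ ≤ _ := by
        refine sum_le_sum_of_subset_of_nonneg (fun e he => ?_) fun e _ _ => mul_nonneg (hc e) (hx e)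
        simp only [edgesIn, mem_filter] at he ⊢
        exact ⟨hFE he.1, he.2⟩

lemma Vx_le_mul {r : ℕ} (hc : ∀ e, 0 ≤ c e) (hx : ∀ e, 0 ≤ x e)
    (hβ : β = (∑ e ∈ G.edgeFinset, c e * x e) / r) (hβpos : 0 < β) :
    Vx G c x S β ≤ (r + 1) * β := by
  have hr : (r : ℝ) ≠ 0 := by
    rintro hr
    rw [hr, div_zero] at hβ
    linarith
  have htotal : ∑ e ∈ G.edgeFinset, c e * x e = r * β := by
    rw [hβ]
    field_simp
  have := sum_le_sum_of_subset_of_nonneg (filter_subset (fun e => ∀ w ∈ e, w ∈ S) G.edgeFinset)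
    fun e _ _ => mul_nonneg (hc e) (hx e)
  rw [Vx]
  linarith

lemma potential_sub_add_nonneg {W : ℝ} (hFE : F ⊆ G.edgeFinset) (hc : ∀ e, 0 ≤ c e)
    (hev : ∀ e ∈ G.edgeFinset, 0 ≤ elen ℓ e)
    (hlip : ∀ e ∈ G.edgeFinset, dmin (ℓ z) e ≤ 1 → dmax (ℓ z) e ≤ dmin (ℓ z) e + elen ℓ e)
    (hβ : 0 < β)
    (hbreak : ∀ e ∈ G.edgeFinset, dmin (ℓ z) e ∉ Set.Ioo t u ∧ dmax (ℓ z) e ∉ Set.Ioo t u)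
    (htu : t < u) (hu : u ≤ 1) (hvW : vol G c ℓ F S z β u ≤ W)
    (hwW : cvol G c ℓ F S z β t ≤ W) :
    0 ≤ potential W (vol G c ℓ F S z β t) - potential W (vol G c ℓ F S z β u) +
      (potential W (cvol G c ℓ F S z β u) - potential W (cvol G c ℓ F S z β t)) := by
  have hκ : 0 ≤ (∑ e ∈ bdry G (ℓ z) S t ∩ F, c e) * (u - t) :=
    mul_nonneg (sum_nonneg fun e _ => hc e) (sub_nonneg.2 htu.le)
  have hvu := vol_add_le (S := S) (β := β) hFE hc hev hlip hbreak htu hu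
  have hwu := cvol_le_sub (S := S) (β := β) hFE hc hev hlip hbreak htu hu
  have hv : 0 < vol G c ℓ F S z β t := hβ.trans_le (le_vol hFE hc hev)
  have hw : 0 < cvol G c ℓ F S z β u := hβ.trans_le (le_cvol hFE hc hev)
  have h1 := potential_le_potential hv (by linarith) hvW
  have h2 := potential_le_potential hw (by linarith) hwW
  linarith

lemma exists_radius_of_potential_sub_le {W a : ℝ} {q : ℕ} (hFE : F ⊆ G.edgeFinset)
    (hc : ∀ e, 0 ≤ c e) (hev : ∀ e ∈ G.edgeFinset, 0 ≤ elen ℓ e)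
    (hlip : ∀ e ∈ G.edgeFinset, dmin (ℓ z) e ≤ 1 → dmax (ℓ z) e ≤ dmin (ℓ z) e + elen ℓ e)
    (hβ : 0 < β)
    (hbreak : ∀ e ∈ G.edgeFinset, dmin (ℓ z) e ∉ Set.Ioo t u ∧ dmax (ℓ z) e ∉ Set.Ioo t u)
    (htu : t < u) (hu : u ≤ 1) (hvW : vol G c ℓ F S z β u ≤ W)
    (hwW : cvol G c ℓ F S z β t ≤ W)
    (hcq : cq c q (bdry G (ℓ z) S t) ≤ ∑ e ∈ bdry G (ℓ z) S t ∩ F, c e)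
    (hinc : potential W (vol G c ℓ F S z β t) - potential W (vol G c ℓ F S z β u) +
      (potential W (cvol G c ℓ F S z β u) - potential W (cvol G c ℓ F S z β t)) ≤ a * (u - t)) :
    ∃ ρ ∈ Set.Ioo t u, cq c q (bdry G (ℓ z) S ρ) ≤ a * weight W (vol G c ℓ F S z β ρ) ∧
      cq c q (bdry G (ℓ z) S ρ) ≤ a * weight W (cvol G c ℓ F S z β ρ) := by
  have hvu := vol_add_le (S := S) (β := β) hFE hc hev hlip hbreak htu hu
  have hwu := cvol_le_sub (S := S) (β := β) hFE hc hev hlip hbreak htu hu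
  set κ := ∑ e ∈ bdry G (ℓ z) S t ∩ F, c e
  have hκ : 0 ≤ κ := sum_nonneg fun e _ => hc e
  have hv : 0 < vol G c ℓ F S z β t := hβ.trans_le (le_vol hFE hc hev)
  have hw : 0 < cvol G c ℓ F S z β u := hβ.trans_le (le_cvol hFE hc hev)
  have hd : 0 ≤ κ * (u - t) := mul_nonneg hκ (sub_nonneg.2 htu.le)
  obtain ⟨s, hs, hsv, hsw⟩ := exists_le_weight_of_potential_sub_le (a := a) (sub_pos.2 htu) hκ hv
    (hvu.trans hvW) (hw.trans_le hwu) hwW (by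
      have h1 := potential_le_potential (by linarith) hvu hvW
      have h2 := potential_le_potential (W := W) hw hwu (by linarith)
      linarith)
  have hρ : t + s ∈ Set.Ioo t u := ⟨by linarith [hs.1], by linarith [hs.2]⟩
  refine ⟨t + s, hρ, ?_, ?_⟩ <;> rw [bdry_eq_of_forall_not_mem_Ioo hbreak hρ.1.le hρ.2]
  · rw [vol_eq_add hFE hbreak hρ.1.le hρ.2, add_sub_cancel_left]
    exact hcq.trans hsv
  · rw [cvol_eq_sub hFE hbreak hρ.1.le hρ.2, add_sub_cancel_left]
    exact hcq.trans hsw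

lemma mul_sum_length_heavy_le {g : V → ℝ} {n q : ℕ} {T : ℕ → ℝ}
    (hT : ∀ j < n, T j < T (j + 1)) (hT1 : ∀ j ≤ n, T j ≤ 1)
    (hbreak : ∀ j < n, ∀ e ∈ G.edgeFinset, dmax g e ∉ Set.Ioo (T j) (T (j + 1)))
    (hy : ∀ e, 0 ≤ y e) (hspan : ∀ e ∈ H, dmin g e ≤ 1 → dmax g e ≤ dmin g e + y e) :
    (q : ℝ) * ∑ j ∈ range n with q ≤ (bdry G g S (T j) ∩ H).card, (T (j + 1) - T j) ≤
      ∑ e ∈ H, y e := by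
  have hlen : ∀ j ∈ range n, 0 ≤ T (j + 1) - T j := fun j hj =>
    sub_nonneg.2 (hT j (mem_range.1 hj)).le
  calc (q : ℝ) * ∑ j ∈ range n with q ≤ (bdry G g S (T j) ∩ H).card, (T (j + 1) - T j)
      ≤ ∑ j ∈ range n with q ≤ (bdry G g S (T j) ∩ H).card,
          ((bdry G g S (T j) ∩ H).card : ℝ) * (T (j + 1) - T j) := by
        rw [mul_sum]
        refine sum_le_sum fun j hj => ?_
        obtain ⟨hj, hq⟩ := mem_filter.1 hj
        exact mul_le_mul_of_nonneg_right (by exact_mod_cast hq) (hlen j hj)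
    _ ≤ ∑ j ∈ range n, ((bdry G g S (T j) ∩ H).card : ℝ) * (T (j + 1) - T j) :=
        sum_le_sum_of_subset_of_nonneg (filter_subset _ _) fun j hj _ =>
          mul_nonneg (Nat.cast_nonneg _) (hlen j hj)
    _ = ∑ e ∈ H, ∑ j ∈ range n with e ∈ bdry G g S (T j), (T (j + 1) - T j) :=
        sum_card_inter_mul _ _ _ _
    _ ≤ ∑ e ∈ H, y e := by
        -- the pieces whose left end has `e` on the boundary lie inside `[dmin e, dmax e]`
        refine sum_le_sum fun e he => ?_
        refine (sum_sub_le_of_mem_Icc (a := dmin g e) (le_add_of_nonneg_right (hy e))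
          (fun j hj => (hT j hj).le) fun j hj hje => ?_).trans_eq (add_sub_cancel_left _ _)
        obtain ⟨heE, -, h1, h2⟩ := mem_bdry.1 hje
        have h3 : T (j + 1) ≤ dmax g e := not_lt.1 fun h => hbreak j hj e heE ⟨h2, h⟩
        exact ⟨h1, h3.trans (hspan e he (h1.trans (hT1 j hj.le)))⟩

lemma exists_radius_cq_le {q : ℕ} {α W M : ℝ} (hFE : F ⊆ G.edgeFinset) (hc : ∀ e, 0 ≤ c e)
    (hev : ∀ e ∈ G.edgeFinset, 0 ≤ elen ℓ e)
    (hlip : ∀ e ∈ G.edgeFinset, dmin (ℓ z) e ≤ 1 → dmax (ℓ z) e ≤ dmin (ℓ z) e + elen ℓ e)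
    (hβ : 0 < β) (hα : α < 1)
    (hW : ∀ ρ ≤ 1, vol G c ℓ F S z β ρ ≤ W ∧ cvol G c ℓ F S z β ρ ≤ W)
    (hM : potential W β ≤ M) (hbdry : ∀ ρ ≤ 1, bdry G (ℓ z) S ρ ⊆ F ∪ H)
    (hy : ∀ e, 0 ≤ y e)
    (hspan : ∀ e ∈ H, dmin (ℓ z) e ≤ 1 → dmax (ℓ z) e ≤ dmin (ℓ z) e + y e)
    (hq : 0 < q) (hyq : ∑ e ∈ H, y e ≤ q * α) :
    ∃ ρ ∈ Set.Ico (0 : ℝ) 1,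
      cq c q (bdry G (ℓ z) S ρ) ≤ 2 * M / (1 - α) * weight W (vol G c ℓ F S z β ρ) ∧
      cq c q (bdry G (ℓ z) S ρ) ≤ 2 * M / (1 - α) * weight W (cvol G c ℓ F S z β ρ) := by
  obtain ⟨n, T, hT0, hTn, hT, hT01, hgap⟩ :=
    exists_partition (G.edgeFinset.image (dmin (ℓ z)) ∪ G.edgeFinset.image (dmax (ℓ z)))
  have hbreak (j : ℕ) (hj : j < n) : ∀ e ∈ G.edgeFinset,
      dmin (ℓ z) e ∉ Set.Ioo (T j) (T (j + 1)) ∧ dmax (ℓ z) e ∉ Set.Ioo (T j) (T (j + 1)) :=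
    fun e he => ⟨hgap j hj _ (mem_union_left _ (mem_image_of_mem _ he)),
      hgap j hj _ (mem_union_right _ (mem_image_of_mem _ he))⟩
  have hT1 (j : ℕ) (hj : j ≤ n) : T j ≤ 1 := (hT01 j hj).2
  have hheavy : ∑ j ∈ range n with q ≤ (bdry G (ℓ z) S (T j) ∩ H).card, (T (j + 1) - T j) ≤ α :=
    le_of_mul_le_mul_left ((mul_sum_length_heavy_le hT hT1 (fun j hj e he => (hbreak j hj e he).2)
      hy hspan).trans hyq) (Nat.cast_pos.2 hq)
  have hsum := (sum_range_potential_sub_le hβ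
    (fun j hj => ⟨le_vol hFE hc hev, (hW _ (hT1 j hj)).1⟩)
    (fun j hj => ⟨le_cvol hFE hc hev, (hW _ (hT1 j hj)).2⟩)).trans (by linarith : _ ≤ 2 * M)
  obtain ⟨j, hj, hlight, hjinc⟩ := exists_not_le_mul_of_sum_le hα
    (fun j hj => potential_sub_add_nonneg hFE hc hev hlip hβ (hbreak j (mem_range.1 hj))
      (hT j (mem_range.1 hj)) (hT1 _ (mem_range.1 hj)) (hW _ (hT1 _ (mem_range.1 hj))).1
      (hW _ (hT1 _ (mem_range.1 hj).le)).2)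
    (by rw [sum_range_sub, hT0, hTn, sub_zero]) hheavy hsum
  rw [mem_range] at hj
  obtain ⟨ρ, hρ, h⟩ := exists_radius_of_potential_sub_le hFE hc hev hlip hβ (hbreak j hj) (hT j hj)
    (hT1 _ hj) (hW _ (hT1 _ hj)).1 (hW _ (hT1 j hj.le)).2
    (cq_le_sum_inter hc (hbdry _ (hT1 j hj.le)) (not_le.1 hlight)) hjinc
  exact ⟨ρ, ⟨(hT01 j hj.le).1.trans hρ.1.le, hρ.2.trans_le (hT1 _ hj)⟩, h⟩

end Growing

theorem stmt_8_general [Fintype V] [DecidableEq V] (G : SimpleGraph V) [DecidableRel G.Adj]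
    (c x y : Sym2 V → ℝ) (F H : Finset (Sym2 V))
    (hc : ∀ e, 0 ≤ c e) (hx : ∀ e, 0 ≤ x e) (hy : ∀ e, 0 ≤ y e)
    (hFE : F ⊆ G.edgeFinset) (hHE : H ⊆ G.edgeFinset) (hFH : Disjoint F H)
    (hxF : ∀ e ∉ F, x e = 0) (hyH : ∀ e ∉ H, y e = 0)
    (k r : ℕ) (hk : 2 ≤ k)
    (hysum : ∑ e ∈ G.edgeFinset, y e ≤ (k : ℝ) - 1)
    (ℓ : V → V → ℝ)
    (hle : ∀ u v, ∀ p : G.Walk u v, ℓ u v ≤ (p.edges.map fun e => x e + y e).sum)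
    (hattain : ∀ u v, G.Reachable u v →
      ∃ p : G.Walk u v, ℓ u v = (p.edges.map fun e => x e + y e).sum)
    (hfar : ∀ u v, ¬ G.Reachable u v → 1 < ℓ u v)
    (β : ℝ) (hβ : β = (∑ e ∈ G.edgeFinset, c e * x e) / r) (hβpos : 0 < β)
    (S : Finset V) (z : V) (α : ℝ) (hα0 : 0 < α) (hα1 : α < 1) :
    ∃ ρ₁ ∈ Set.Ico (0 : ℝ) 1,
      (cq c ⌈((k : ℝ) - 1) / α⌉₊ (bdry G (ℓ z) S ρ₁) ≤
        2 / (1 - α) * vol G c ℓ F S z β ρ₁ *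
          Real.log (Real.exp 1 * Vx G c x S β / vol G c ℓ F S z β ρ₁) *
          Real.log (Real.log (Real.exp 1 * (r + 1)))) ∧
      (cq c ⌈((k : ℝ) - 1) / α⌉₊ (bdry G (ℓ z) S ρ₁) ≤
        2 / (1 - α) * cvol G c ℓ F S z β ρ₁ *
          Real.log (Real.exp 1 * Vx G c x S β / cvol G c ℓ F S z β ρ₁) *
          Real.log (Real.log (Real.exp 1 * (r + 1)))) := by
  have hℓ : IsPathMetric G (fun e => x e + y e) ℓ := ⟨hle, hattain⟩
  have hlen (e) (he : e ∈ G.edgeFinset) : elen ℓ e ≤ x e + y e :=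
    hℓ.elen_le (SimpleGraph.mem_edgeFinset.1 he)
  have hev (e) (he : e ∈ G.edgeFinset) : 0 ≤ elen ℓ e :=
    hℓ.elen_nonneg (fun e => add_nonneg (hx e) (hy e)) (SimpleGraph.mem_edgeFinset.1 he)
  have hlip (e) (he : e ∈ G.edgeFinset) :
      dmin (ℓ z) e ≤ 1 → dmax (ℓ z) e ≤ dmin (ℓ z) e + elen ℓ e :=
    hℓ.dmax_le_dmin_add_elen (hfar z) (SimpleGraph.mem_edgeFinset.1 he)
  have helenF (e) (he : e ∈ F) : elen ℓ e ≤ x e := by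
    linarith [hlen e (hFE he), hyH e (disjoint_left.1 hFH he)]
  have hspan (e) (he : e ∈ H) (hd : dmin (ℓ z) e ≤ 1) : dmax (ℓ z) e ≤ dmin (ℓ z) e + y e := by
    linarith [hlip e (hHE he) hd, hlen e (hHE he), hxF e (disjoint_right.1 hFH he)]
  have hW (ρ : ℝ) (hρ : ρ ≤ 1) :
      vol G c ℓ F S z β ρ ≤ Vx G c x S β ∧ cvol G c ℓ F S z β ρ ≤ Vx G c x S β :=
    ⟨(vol_le hFE hc hev hlip hρ).trans (add_sum_edgesIn_le_Vx hFE hc hx helenF),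
      (cvol_le hFE hc hev hlip hρ).trans (add_sum_edgesIn_le_Vx hFE hc hx helenF)⟩
  have hβW : β ≤ Vx G c x S β := (le_vol (ρ := 0) hFE hc hev).trans (hW 0 zero_le_one).1
  have hk1 : (0 : ℝ) < k - 1 := by
    have : (2 : ℝ) ≤ k := by exact_mod_cast hk
    linarith
  obtain ⟨ρ, hρ, hvol, hcvol⟩ := exists_radius_cq_le (q := ⌈((k : ℝ) - 1) / α⌉₊) hFE hc hev hlip
    hβpos hα1 hW (potential_le_log_log hβpos hβW (Vx_le_mul hc hx hβ hβpos))
    (fun ρ hρ => bdry_subset_union hlip hlen hxF hyH hρ) hy hspan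
    (Nat.ceil_pos.2 (div_pos hk1 hα0))
    ((sum_le_sum_of_subset_of_nonneg hHE fun e _ _ => hy e).trans
      (hysum.trans ((div_le_iff₀ hα0).1 (Nat.le_ceil _))))
  exact ⟨ρ, hρ, hvol.trans_eq (by unfold weight; ring), hcvol.trans_eq (by unfold weight; ring)⟩

/-- Region growing for the multicut LP metrics: in the subdivided LP
setup (with `ℓ` the shortest-path pseudometric of the edge lengths `x + y`, encoded by
`hle`/`hattain`, and `ℓ u v > 1` for unreachable pairs), for every `S ⊆ V`, `z ∈ V`
and `α ∈ (0,1)`, with `q = ⌈(k-1)/α⌉` there exists `ρ₁ ∈ [0,1)` satisfying both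
volume bounds for `c^q(∂(ρ₁))`. -/
theorem stmt_8 [Fintype V] [DecidableEq V] (G : SimpleGraph V) [DecidableRel G.Adj]
    (c x y : Sym2 V → ℝ) (F H : Finset (Sym2 V))
    (hc : ∀ e, 0 ≤ c e) (hx : ∀ e, 0 ≤ x e) (hy : ∀ e, 0 ≤ y e)
    (hFE : F ⊆ G.edgeFinset) (hHE : H ⊆ G.edgeFinset) (hFH : Disjoint F H)
    (hxF : ∀ e ∉ F, x e = 0) (hyH : ∀ e ∉ H, y e = 0)
    (k r : ℕ) (hk : 2 ≤ k) (hr : 1 ≤ r)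
    (hysum : ∑ e ∈ G.edgeFinset, y e ≤ (k : ℝ) - 1)
    (ℓ : V → V → ℝ)
    (hle : ∀ u v, ∀ p : G.Walk u v, ℓ u v ≤ (p.edges.map fun e => x e + y e).sum)
    (hattain : ∀ u v, G.Reachable u v →
      ∃ p : G.Walk u v, ℓ u v = (p.edges.map fun e => x e + y e).sum)
    (hfar : ∀ u v, ¬ G.Reachable u v → 1 < ℓ u v)
    (β : ℝ) (hβ : β = (∑ e ∈ G.edgeFinset, c e * x e) / r) (hβpos : 0 < β)
    (S : Finset V) (z : V) (α : ℝ) (hα0 : 0 < α) (hα1 : α < 1) :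
    ∃ ρ₁ ∈ Set.Ico (0 : ℝ) 1,
      (cq c ⌈((k : ℝ) - 1) / α⌉₊ (bdry G (ℓ z) S ρ₁) ≤
        2 / (1 - α) * vol G c ℓ F S z β ρ₁ *
          Real.log (Real.exp 1 * Vx G c x S β / vol G c ℓ F S z β ρ₁) *
          Real.log (Real.log (Real.exp 1 * (r + 1)))) ∧
      (cq c ⌈((k : ℝ) - 1) / α⌉₊ (bdry G (ℓ z) S ρ₁) ≤
        2 / (1 - α) * cvol G c ℓ F S z β ρ₁ *
          Real.log (Real.exp 1 * Vx G c x S β / cvol G c ℓ F S z β ρ₁) *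
          Real.log (Real.log (Real.exp 1 * (r + 1)))) :=
  stmt_8_general G c x y F H hc hx hy hFE hHE hFH hxF hyH k r hk hysum ℓ hle hattain hfar β hβ hβpos
    S z α hα0 hα1

end SubdividedLP
end
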